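/- arXiv:2406.03300 — 9 statements merged into one kernel-verified Lean document; each statement's English description precedes it below -/
import Mathlib

section
/- Let N ≥ 2 and let P ∈ ℂ[X₁,…,X_N] be a symmetric polynomial such that P(−x, x, x₃, …, x_N) = 0 for all complex values of x, x₃, …, x_N. Then the product ∏_{1 ≤ k < l ≤ N} (X_k + X_l) divides P in ℂ[X₁,…,X_N]. -/
open MvPolynomial

noncomputable def subf {N : ℕ} (k l : Fin N) : Fin N → MvPolynomial (Fin N) ℂ :=
  fun i => if i = k then -X l else X i

lemma dvd_sub_aeval {N : ℕ} (k l : Fin N) (P : MvPolynomial (Fin N) ℂ) :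
    (X k + X l) ∣ (P - aeval (subf k l) P) := by
  induction P using MvPolynomial.induction_on with
  | C a => simp [aeval_C, algebraMap_eq]
  | add p q hp hq =>
      have : p + q - aeval (subf k l) (p + q)
          = (p - aeval (subf k l) p) + (q - aeval (subf k l) q) := by
        rw [map_add]; ring
      rw [this]; exact dvd_add hp hq
  | mul_X p i hp =>
      have : p * X i - aeval (subf k l) (p * X i)
          = (p - aeval (subf k l) p) * X i
            + aeval (subf k l) p * (X i - subf k l i) := by
        rw [map_mul, aeval_X]; ring
      rw [this]
      refine dvd_add (Dvd.dvd.mul_right hp _) ?_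
      by_cases h : i = k
      · subst h
        have : X i - subf i l i = X i + X l := by simp [subf]
        rw [this]
        exact Dvd.dvd.mul_left dvd_rfl _
      · simp [subf, h]

lemma dvd_iff_aeval {N : ℕ} {k l : Fin N} (hkl : k ≠ l) (P : MvPolynomial (Fin N) ℂ) :
    (X k + X l) ∣ P ↔ aeval (subf k l) P = 0 := by
  constructor
  · rintro ⟨Q, rfl⟩
    have h0 : aeval (R := ℂ) (subf k l) (X k + X l) = 0 := by
      simp [subf, hkl.symm]
    rw [map_mul (aeval (R := ℂ) (subf k l)) (X k + X l) Q, h0, zero_mul]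
  · intro h
    have := dvd_sub_aeval k l P
    rwa [h, sub_zero] at this

lemma prime_X_add_X {N : ℕ} {k l : Fin N} (hkl : k ≠ l) :
    Prime (X k + X l : MvPolynomial (Fin N) ℂ) := by
  constructor
  · intro h0
    have := congrArg (eval (fun _ => (1 : ℂ))) h0
    simp at this
  constructor
  · intro hu
    have h1 : (X k + X l : MvPolynomial (Fin N) ℂ) ∣ 1 := hu.dvd
    rw [dvd_iff_aeval hkl] at h1
    simp at h1
  · intro a b hab
    rw [dvd_iff_aeval hkl] at hab ⊢
    rw [dvd_iff_aeval hkl (P := b)]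
    rw [map_mul] at hab
    exact mul_eq_zero.mp hab

lemma not_dvd_pairs {N : ℕ} {k l k' l' : Fin N} (hkl : k < l) (hkl' : k' < l')
    (hne : (k, l) ≠ (k', l')) :
    ¬ ((X k' + X l' : MvPolynomial (Fin N) ℂ) ∣ (X k + X l)) := by
  rw [dvd_iff_aeval hkl'.ne]
  intro h
  rw [map_add, aeval_X, aeval_X] at h
  simp only [subf] at h
  by_cases h1 : k = k'
  · have h2 : l ≠ k' := by omega
    have h3 : l ≠ l' := by
      intro h3; exact hne (by rw [h1, h3])
    rw [if_pos h1, if_neg h2] at h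
    have := congrArg (eval (fun i => if i = l then (1:ℂ) else 0)) h
    simp [Ne.symm h3] at this
  · by_cases h2 : l = k'
    · have h4 : k ≠ l' := by omega
      rw [if_neg h1, if_pos h2] at h
      have := congrArg (eval (fun i => if i = k then (1:ℂ) else 0)) h
      simp [Ne.symm h4] at this
    · rw [if_neg h1, if_neg h2] at h
      have := congrArg (eval (fun i => if i = k then (1:ℂ) else 0)) h
      by_cases h5 : l = k
      · omega
      · simp [h5] at this

lemma prod_primes_dvd' {α : Type*} [CommMonoidWithZero α] {ι : Type*} [DecidableEq ι]
    (s : Finset ι) (f : ι → α) (hp : ∀ i ∈ s, Prime (f i))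
    (hnd : ∀ i ∈ s, ∀ j ∈ s, i ≠ j → ¬ f i ∣ f j)
    (n : α) (h : ∀ i ∈ s, f i ∣ n) : (∏ i ∈ s, f i) ∣ n := by
  revert hp hnd n h
  induction s using Finset.induction_on with
  | empty => simp
  | @insert a s ha ih =>
      intro hp hnd n h
      obtain ⟨m, rfl⟩ := h a (Finset.mem_insert_self a s)
      rw [Finset.prod_insert ha]
      refine mul_dvd_mul_left (f a) (ih ?_ ?_ m ?_)
      · exact fun i hi => hp i (Finset.mem_insert_of_mem hi)
      · exact fun i hi j hj hij =>
          hnd i (Finset.mem_insert_of_mem hi) j (Finset.mem_insert_of_mem hj) hij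
      · intro i hi
        have hia : i ≠ a := fun h' => ha (h' ▸ hi)
        have hdvd : f i ∣ f a * m := h i (Finset.mem_insert_of_mem hi)
        rcases (hp i (Finset.mem_insert_of_mem hi)).2.2 _ _ hdvd with h1 | h1
        · exact absurd h1 (hnd i (Finset.mem_insert_of_mem hi) a
            (Finset.mem_insert_self a s) hia)
        · exact h1

lemma key_dvd {N : ℕ} (hN : 2 ≤ N) (P : MvPolynomial (Fin N) ℂ) (hsym : P.IsSymmetric)
    (hker : ∀ (x : ℂ) (v : Fin N → ℂ),
      eval (fun i : Fin N => if i.val = 0 then -x else if i.val = 1 then x else v i) P = 0)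
    {k l : Fin N} (hkl : k < l) : (X k + X l) ∣ P := by
  have hkl' : k ≠ l := hkl.ne
  rw [dvd_iff_aeval hkl']
  apply (MvPolynomial.funext_iff (q := 0)).mpr
  intro v
  rw [map_zero]
  -- compose evaluations
  have step1 : eval v (aeval (subf k l) P)
      = eval (fun i => eval v (subf k l i)) P := by
    rw [aeval_def, eval_eval₂]
    have hf : (eval v).comp (algebraMap ℂ (MvPolynomial (Fin N) ℂ)) = RingHom.id ℂ := by
      ext a; simp [algebraMap_eq]
    rw [hf, eval₂_id]
  rw [step1]
  have hv' : (fun i => eval v (subf k l i)) = fun i => if i = k then -(v l) else v i := by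
    funext i; by_cases h : i = k <;> simp [subf, h]
  rw [hv']
  set v' : Fin N → ℂ := fun i => if i = k then -(v l) else v i with hv'def
  -- permutation
  set z0 : Fin N := ⟨0, by omega⟩
  set z1 : Fin N := ⟨1, by omega⟩
  have hz : z0 ≠ z1 := by simp [z0, z1, Fin.ext_iff]
  set σ : Equiv.Perm (Fin N) := Equiv.swap z0 k
  set ρ : Equiv.Perm (Fin N) := Equiv.swap (σ z1) l
  set τ : Equiv.Perm (Fin N) := σ.trans ρ
  have hσk : σ z0 = k := Equiv.swap_apply_left z0 k
  have hσ1k : σ z1 ≠ k := by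
    rw [← hσk]; exact fun h => hz (σ.injective h.symm)
  have hτ0 : τ z0 = k := by
    show ρ (σ z0) = k
    rw [hσk]
    exact Equiv.swap_apply_of_ne_of_ne (Ne.symm hσ1k) hkl'
  have hτ1 : τ z1 = l := by
    show ρ (σ z1) = l
    exact Equiv.swap_apply_left _ _
  rw [← hsym τ, eval_rename]
  have : (v' ∘ τ) = fun i : Fin N =>
      if i.val = 0 then -(v l) else if i.val = 1 then v l else (v' ∘ τ) i := by
    funext i
    by_cases h0 : i = z0
    · subst h0; simp [z0, hτ0, v']
    · have h0' : i.val ≠ 0 := fun h => h0 (Fin.ext h)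
      by_cases h1 : i = z1
      · subst h1
        have : τ z1 ≠ k := by rw [hτ1]; exact hkl'.symm
        simp [z1, hτ1, v', Function.comp, hkl'.symm]
      · have h1' : i.val ≠ 1 := fun h => h1 (Fin.ext h)
        simp [h0', h1']
  rw [this]
  have := hker (v l) (fun i => (v' ∘ τ) i)
  convert this using 2

/-- A symmetric polynomial vanishing whenever two variables are
opposite is divisible by `∏_{k<l} (X_k + X_l)`. -/
theorem kinematic_kernel_factorization (N : ℕ) (hN : 2 ≤ N)
    (P : MvPolynomial (Fin N) ℂ) (hsym : P.IsSymmetric)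
    (hker : ∀ (x : ℂ) (v : Fin N → ℂ),
      eval (fun i : Fin N => if i.val = 0 then -x else if i.val = 1 then x else v i) P = 0) :
    (∏ p ∈ Finset.univ.filter (fun p : Fin N × Fin N => p.1 < p.2),
        (X p.1 + X p.2)) ∣ P := by
  apply prod_primes_dvd' _ (fun p : Fin N × Fin N => X p.1 + X p.2)
  · intro p hp
    rw [Finset.mem_filter] at hp
    exact prime_X_add_X hp.2.ne
  · intro p hp q hq hpq
    rw [Finset.mem_filter] at hp hq
    have hne : (q.1, q.2) ≠ (p.1, p.2) := by
      intro h
      apply hpq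
      have h1 : q.1 = p.1 := (Prod.mk.injEq _ _ _ _ ▸ h).1
      have h2 : q.2 = p.2 := (Prod.mk.injEq _ _ _ _ ▸ h).2
      exact (Prod.ext h1.symm h2.symm)
    exact not_dvd_pairs hq.2 hp.2 hne
  · intro p hp
    rw [Finset.mem_filter] at hp
    exact key_dvd hN P hsym hker hp.2
end

section
/- Let N ≥ 2, and let φ ∈ ℂ with φ ≠ 0 and φ⁴ ≠ 1. Let P ∈ ℂ[X₁,…,X_N] be a symmetric polynomial such that P(φx, φ⁻¹x, x₃, …, x_N) = 0 for all complex values of x, x₃, …, x_N. Then the product ∏_{1 ≤ k < l ≤ N} (X_k − φ²X_l)(X_l − φ²X_k) divides P in ℂ[X₁,…,X_N]. -/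
/-!
By symmetry `P` vanishes on every hyperplane `x_k = φ² x_l` (`k ≠ l`): a permutation of the
variables carries it into the fusion locus `x₁ = φ² x₂`. Over an infinite field this makes
`X_k - φ² X_l` a divisor of `P`, and this linear form is prime, being the image of `X_k` under a
shear automorphism. Because `φ² ≠ 0` and `φ⁴ ≠ 1`, distinct ordered pairs `(k, l)` give
non-associated primes, so their product divides `P`.
-/

open MvPolynomial

theorem Equiv.Perm.exists_apply_eq_and_apply_eq {α : Type*} [DecidableEq α] {a b i j : α}
    (hab : a ≠ b) (hij : i ≠ j) : ∃ σ : Equiv.Perm α, σ a = i ∧ σ b = j := by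
  have haj : a ≠ Equiv.swap a i j := by
    rw [Ne, eq_comm, Equiv.swap_apply_eq_iff, Equiv.swap_apply_left]
    exact hij.symm
  exact ⟨Equiv.swap a i * Equiv.swap b (Equiv.swap a i j),
    by simp [Equiv.swap_apply_of_ne_of_ne hab haj], by simp⟩

theorem Finset.prod_filter_lt_mul_swap {ι M : Type*} [LinearOrder ι] [Fintype ι] [CommMonoid M]
    (f : ι × ι → M) :
    ∏ p ∈ univ.filter (fun p : ι × ι => p.1 < p.2), f p * f p.swap
      = ∏ p ∈ univ.offDiag, f p := by
  have hswap : ∏ p ∈ univ.filter (fun p : ι × ι => p.1 < p.2), f p.swap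
      = ∏ p ∈ univ.filter (fun p : ι × ι => p.2 < p.1), f p :=
    prod_equiv (Equiv.prodComm ι ι) (by simp) (by simp)
  have hsplit : (univ : Finset ι).offDiag = univ.filter (fun p : ι × ι => p.1 < p.2)
      ∪ univ.filter (fun p : ι × ι => p.2 < p.1) := by
    ext p
    simp
  rw [prod_mul_distrib, hswap, hsplit, prod_union]
  exact disjoint_filter.2 fun p _ h => h.asymm

namespace MvPolynomial

variable {σ R : Type*}

theorem IsSymmetric.eval_comp [CommSemiring R] {P : MvPolynomial σ R}
    (hP : P.IsSymmetric) (e : Equiv.Perm σ) (u : σ → R) : eval (u ∘ e) P = eval u P := by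
  rw [← eval_rename, hP e]

theorem IsSymmetric.eval_eq_zero_of_apply_eq_mul [CommSemiring R] [DecidableEq σ]
    {P : MvPolynomial σ R} (hP : P.IsSymmetric) {a b : σ} (hab : a ≠ b) {c : R}
    (h : ∀ u : σ → R, u a = c * u b → eval u P = 0) {i j : σ} (hij : i ≠ j) (u : σ → R)
    (hu : u i = c * u j) : eval u P = 0 := by
  obtain ⟨e, hea, heb⟩ := Equiv.Perm.exists_apply_eq_and_apply_eq hab hij
  rw [← hP.eval_comp e]
  exact h _ (by simpa [hea, heb] using hu)

section CommRing

variable [CommRing R] [DecidableEq σ]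

theorem X_sub_dvd_sub_bind₁_update (i : σ) (q P : MvPolynomial σ R) :
    X i - q ∣ P - bind₁ (Function.update X i q) P := by
  set I := Ideal.span {X i - q}
  have hmod : (Ideal.Quotient.mkₐ R I).comp (bind₁ (Function.update X i q)) =
      Ideal.Quotient.mkₐ R I := by
    refine algHom_ext fun k => ?_
    rcases eq_or_ne k i with rfl | hk
    · simp only [AlgHom.comp_apply, bind₁_X_right, Function.update_self,
        Ideal.Quotient.mkₐ_eq_mk, Ideal.Quotient.eq, ← neg_sub (X k)]
      exact I.neg_mem (Ideal.mem_span_singleton_self _)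
    · simp [hk]
  rw [← Ideal.mem_span_singleton, ← Ideal.Quotient.eq]
  exact (congrArg (· P) hmod).symm

theorem X_sub_C_mul_X_dvd_of_eval_eq_zero [IsDomain R] [Infinite R] {i j : σ} (hij : i ≠ j)
    (c : R) {P : MvPolynomial σ R} (h : ∀ u : σ → R, u i = c * u j → eval u P = 0) :
    X i - C c * X j ∣ P := by
  have hsubst : bind₁ (Function.update X i (C c * X j)) P = 0 := by
    refine MvPolynomial.funext fun v => ?_
    rw [map_zero, ← h (fun k => eval v (Function.update X i (C c * X j) k))
      (by simp [Function.update_of_ne hij.symm])]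
    exact eval₂Hom_bind₁ _ _ _ _
  have := X_sub_dvd_sub_bind₁_update i (C c * X j) P
  rwa [hsubst, sub_zero] at this

theorem prime_X_sub_C_mul_X [IsDomain R] {i j : σ} (hij : i ≠ j) (c : R) :
    Prime (X i - C c * X j : MvPolynomial σ R) := by
  let shear : R → MvPolynomial σ R →ₐ[R] MvPolynomial σ R :=
    fun t => bind₁ (Function.update X i (X i + C t * X j))
  have hshear : ∀ s t, (shear s).comp (shear t) = shear (s + t) := by
    intro s t
    refine algHom_ext fun k => ?_
    rcases eq_or_ne k i with rfl | hk
    · simp [shear, hij.symm]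
      ring
    · simp [shear, hk]
  have hshear_zero : shear 0 = AlgHom.id R _ := by
    refine algHom_ext fun k => ?_
    rcases eq_or_ne k i with rfl | hk <;> simp [shear, *]
  let e : MvPolynomial σ R ≃ₐ[R] MvPolynomial σ R :=
    AlgEquiv.ofAlgHom (shear (-c)) (shear c) (by rw [hshear, neg_add_cancel, hshear_zero])
      (by rw [hshear, add_neg_cancel, hshear_zero])
  have he : e (X i) = X i - C c * X j := by simp [e, shear, sub_eq_add_neg]
  rw [← he]
  exact (MulEquiv.prime_iff e.toMulEquiv).2 X_prime

theorem eq_of_X_sub_C_mul_X_dvd [Nontrivial R] {c : R} (hc0 : c ≠ 0) (hc2 : c ^ 2 ≠ 1)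
    {i j k l : σ} (hkl : k ≠ l) (h : X i - C c * X j ∣ X k - C c * X l) : k = i ∧ l = j := by
  -- Test `X k - c X l` on the points `Pi.single m 1` (`m ∉ {i, j}`) and `c eᵢ + eⱼ` of the
  -- hyperplane `v i = c * v j`.
  have hvan : ∀ v : σ → R, v i = c * v j → v k - c * v l = 0 := by
    intro v hv
    obtain ⟨r, hr⟩ := h
    simpa [hv] using congrArg (eval v) hr
  have hk : k = i ∨ k = j := by
    by_contra! hk
    simpa [hkl.symm, Pi.single_apply, hk.1.symm, hk.2.symm] using hvan (Pi.single k 1)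
  have hl : l = i ∨ l = j := by
    by_contra! hl
    simpa [hkl, Pi.single_apply, hl.1.symm, hl.2.symm, hc0] using hvan (Pi.single l 1)
  rcases hk with rfl | rfl <;> rcases hl with rfl | rfl
  · exact absurd rfl hkl
  · exact ⟨rfl, rfl⟩
  · have := hvan (Pi.single l c + Pi.single k 1) (by simp [hkl.symm, hkl])
    have hc : 1 - c * c = 0 := by simpa [hkl, hkl.symm] using this
    exact absurd (by linear_combination -hc) hc2
  · exact absurd rfl hkl

end CommRing

end MvPolynomial

/-- A symmetric polynomial vanishing at the fusion locus
`(φx, φ⁻¹x, …)` is divisible by `∏_{k<l} (X_k − φ²X_l)(X_l − φ²X_k)`. -/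
theorem fusion_kernel_factorization (N : ℕ) (hN : 2 ≤ N) (φ : ℂ)
    (hφ0 : φ ≠ 0) (hφ4 : φ ^ 4 ≠ 1)
    (P : MvPolynomial (Fin N) ℂ) (hsym : P.IsSymmetric)
    (hker : ∀ (x : ℂ) (v : Fin N → ℂ),
      eval (fun i : Fin N =>
        if i.val = 0 then φ * x else if i.val = 1 then φ⁻¹ * x else v i) P = 0) :
    (∏ p ∈ Finset.univ.filter (fun p : Fin N × Fin N => p.1 < p.2),
        ((X p.1 - C (φ ^ 2) * X p.2) * (X p.2 - C (φ ^ 2) * X p.1))) ∣ P := by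
  classical
  have hφ2 : φ ^ 2 ≠ 0 := pow_ne_zero 2 hφ0
  have hφ2_sq : (φ ^ 2) ^ 2 ≠ 1 := by rwa [← pow_mul]
  let a : Fin N := ⟨0, by omega⟩
  let b : Fin N := ⟨1, by omega⟩
  have hfusion : ∀ u : Fin N → ℂ, u a = φ ^ 2 * u b → eval u P = 0 := by
    intro u hu
    convert hker (φ * u b) u using 3
    funext ⟨k, hk⟩
    rcases k with _ | _ | k
    · rw [if_pos rfl]
      exact hu.trans (by ring)
    · simp [b, hφ0]
    · simp
  have hab : a ≠ b := by simp [a, b, Fin.ext_iff]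
  refine (dvd_of_eq (Finset.prod_filter_lt_mul_swap
    fun p : Fin N × Fin N => X p.1 - C (φ ^ 2) * X p.2)).trans ?_
  refine Finset.prod_dvd_of_isRelPrime (fun p hp q hq hpq => ?_) fun p hp => ?_
  · refine (prime_X_sub_C_mul_X (Finset.mem_offDiag.1 hp).2.2 _).irreducible
      |>.isRelPrime_iff_not_dvd.2 fun hdvd => hpq ?_
    obtain ⟨h1, h2⟩ := eq_of_X_sub_C_mul_X_dvd hφ2 hφ2_sq (Finset.mem_offDiag.1 hq).2.2 hdvd
    exact Prod.ext h1.symm h2.symm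
  · have hne := (Finset.mem_offDiag.1 hp).2.2
    exact X_sub_C_mul_X_dvd_of_eval_eq_zero hne _
      (hsym.eval_eq_zero_of_apply_eq_mul hab hfusion hne)
end

section
/- Let n ≥ 2 and let K ∈ ℂ[X₁,…,X_n] be a symmetric homogeneous polynomial of total degree 3n(n−1)/2 such that K(−x, x, x₃, …, x_n) = 0 for all complex values and K(e^{iπ/3}x, e^{−iπ/3}x, x₃, …, x_n) = 0 for all complex values. Then there exists a constant c ∈ ℂ with K = c · ∏_{1 ≤ k < l ≤ n} (X_k + X_l)(X_k − e^{2iπ/3}X_l)(X_l − e^{2iπ/3}X_k). -/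
open MvPolynomial

namespace A2Aux

noncomputable section

variable {n : ℕ}

/-- The linear form `X i - c • X j`. -/
def lin (i j : Fin n) (c : ℂ) : MvPolynomial (Fin n) ℂ := X i - C c * X j

/-- The substitution `X i ↦ c * X j`. -/
def sub1 (i j : Fin n) (c : ℂ) : MvPolynomial (Fin n) ℂ →ₐ[ℂ] MvPolynomial (Fin n) ℂ :=
  aeval (Function.update X i (C c * X j))

lemma sub1_X_self (i j : Fin n) (c : ℂ) : sub1 i j c (X i) = C c * X j := by
  simp [sub1]

lemma sub1_X_ne (i j : Fin n) (c : ℂ) {k : Fin n} (hk : k ≠ i) : sub1 i j c (X k) = X k := by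
  simp [sub1, Function.update_of_ne hk]

lemma sub1_C (i j : Fin n) (c a : ℂ) : sub1 i j c (MvPolynomial.C a) = MvPolynomial.C a := by
  simp [sub1, algebraMap_eq]

lemma sub1_lin (i j : Fin n) (hij : i ≠ j) (c : ℂ) : sub1 i j c (lin i j c) = 0 := by
  rw [lin, map_sub, map_mul, sub1_X_self, sub1_C, sub1_X_ne i j c hij.symm, sub_self]

lemma dvd_sub_sub1 (i j : Fin n) (c : ℂ) (p : MvPolynomial (Fin n) ℂ) :
    lin i j c ∣ p - sub1 i j c p := by
  induction p using MvPolynomial.induction_on with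
  | C a => rw [sub1_C, sub_self]; exact dvd_zero _
  | add p q hp hq =>
      have h : p + q - sub1 i j c (p + q)
          = (p - sub1 i j c p) + (q - sub1 i j c q) := by rw [map_add]; ring
      rw [h]; exact dvd_add hp hq
  | mul_X p k hp =>
      rcases eq_or_ne k i with rfl | hk
      · rw [map_mul, sub1_X_self]
        have h : p * X k - sub1 k j c p * (C c * X j)
            = p * lin k j c + (p - sub1 k j c p) * (C c * X j) := by rw [lin]; ring
        rw [h]
        exact dvd_add (dvd_mul_left _ _) (hp.mul_right _)
      · rw [map_mul, sub1_X_ne _ _ _ hk]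
        have h : p * X k - sub1 i j c p * X k = (p - sub1 i j c p) * X k := by ring
        rw [h]; exact hp.mul_right _

lemma lin_dvd_iff (i j : Fin n) (hij : i ≠ j) (c : ℂ) {p : MvPolynomial (Fin n) ℂ} :
    lin i j c ∣ p ↔ sub1 i j c p = 0 := by
  constructor
  · rintro ⟨q, rfl⟩
    rw [map_mul, sub1_lin i j hij, zero_mul]
  · intro h
    have h2 := dvd_sub_sub1 i j c p
    rwa [h, sub_zero] at h2

lemma eval_sub1 (i j : Fin n) (c : ℂ) (p : MvPolynomial (Fin n) ℂ) (x : Fin n → ℂ) :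
    eval x (sub1 i j c p) = eval (Function.update x i (c * x j)) p := by
  have hpt : (fun k => (aeval x : MvPolynomial (Fin n) ℂ →ₐ[ℂ] ℂ)
      (Function.update X i (C c * X j) k)) = Function.update x i (c * x j) := by
    funext k
    rcases eq_or_ne k i with rfl | hk
    · simp
    · simp [Function.update_of_ne hk]
  have h := comp_aeval_apply (f := Function.update X i (C c * X j))
    (aeval x : MvPolynomial (Fin n) ℂ →ₐ[ℂ] ℂ) p
  rw [hpt] at h
  exact h

lemma lin_dvd_of_vanishing (i j : Fin n) (hij : i ≠ j) (c : ℂ) (p : MvPolynomial (Fin n) ℂ)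
    (h : ∀ v : Fin n → ℂ, v i = c * v j → eval v p = 0) : lin i j c ∣ p := by
  rw [lin_dvd_iff i j hij]
  apply MvPolynomial.funext (q := 0)
  intro x
  rw [eval_sub1, map_zero]
  apply h
  rw [Function.update_of_ne hij.symm, Function.update_self]

lemma lin_ne_zero (i j : Fin n) (hij : i ≠ j) (c : ℂ) : lin i j c ≠ 0 := by
  intro h
  have h2 := congrArg (eval (fun k => if k = i then (1 : ℂ) else 0)) h
  simp [lin, Ne.symm hij] at h2

lemma prime_lin (i j : Fin n) (hij : i ≠ j) (c : ℂ) : Prime (lin i j c) := by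
  refine ⟨lin_ne_zero i j hij c, ?_, ?_⟩
  · intro h
    have h2 := h.dvd (α := MvPolynomial (Fin n) ℂ) (a := 1)
    rw [lin_dvd_iff i j hij, map_one] at h2
    exact one_ne_zero h2
  · intro a b hab
    rw [lin_dvd_iff i j hij, map_mul] at hab
    rcases mul_eq_zero.mp hab with h | h
    · exact Or.inl ((lin_dvd_iff i j hij c).mpr h)
    · exact Or.inr ((lin_dvd_iff i j hij c).mpr h)

lemma lin_not_dvd_lin {i j i' j' : Fin n} (hij : i ≠ j) (hij' : i' ≠ j') {c c' : ℂ} (hc : c ≠ 0)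
    (h1 : i' = i → j' = j → c' ≠ c) (h2 : i' = j → j' = i → c * c' ≠ 1) :
    ¬ lin i j c ∣ lin i' j' c' := by
  rw [lin_dvd_iff i j hij]
  intro h
  rw [lin, map_sub, map_mul, sub1_C] at h
  rcases eq_or_ne i' i with rfl | hii'
  · rw [sub1_X_self, sub1_X_ne i' j c (hij'.symm)] at h
    rcases eq_or_ne j' j with rfl | hjj'
    · -- C c * X j' - C c' * X j' = 0
      have h3 := congrArg (eval (fun k => if k = j' then (1 : ℂ) else 0)) h
      simp at h3
      exact h1 rfl rfl (by linear_combination -h3)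
    · have h3 := congrArg (eval (fun k => if k = j then (1 : ℂ) else 0)) h
      simp [hjj'] at h3
      exact hc h3
  · rw [sub1_X_ne i j c hii'] at h
    rcases eq_or_ne j' i with rfl | hji'
    · rw [sub1_X_self] at h
      rcases eq_or_ne i' j with rfl | hij2
      · have h3 := congrArg (eval (fun k => if k = i' then (1 : ℂ) else 0)) h
        simp at h3
        exact h2 rfl rfl (by linear_combination -h3)
      · have h3 := congrArg (eval (fun k => if k = i' then (1 : ℂ) else 0)) h
        simp [Ne.symm hij2] at h3
    · rw [sub1_X_ne i j c hji'] at h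
      exact lin_ne_zero i' j' hij' c' h

lemma prod_primes_dvd {ι : Type*} [DecidableEq ι] (s : Finset ι)
    (f : ι → MvPolynomial (Fin n) ℂ) (K : MvPolynomial (Fin n) ℂ)
    (hp : ∀ i ∈ s, Prime (f i)) (hd : ∀ i ∈ s, f i ∣ K)
    (hnd : ∀ i ∈ s, ∀ j ∈ s, i ≠ j → ¬ f i ∣ f j) :
    (∏ i ∈ s, f i) ∣ K := by
  induction s using Finset.induction_on generalizing K with
  | empty => simp
  | @insert a s ha ih =>
      rw [Finset.prod_insert ha]
      obtain ⟨K', rfl⟩ := hd a (Finset.mem_insert_self a s)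
      have hd' : ∀ i ∈ s, f i ∣ K' := by
        intro i hi
        have hia : i ≠ a := fun h => ha (h ▸ hi)
        have := (hp i (Finset.mem_insert_of_mem hi)).dvd_or_dvd
          (hd i (Finset.mem_insert_of_mem hi))
        rcases this with h | h
        · exact absurd h (hnd i (Finset.mem_insert_of_mem hi) a (Finset.mem_insert_self a s) hia)
        · exact h
      exact mul_dvd_mul_left (f a)
        (ih K' (fun i hi => hp i (Finset.mem_insert_of_mem hi)) hd'
          (fun i hi j hj hij => hnd i (Finset.mem_insert_of_mem hi) j
            (Finset.mem_insert_of_mem hj) hij))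

lemma vanish_transfer (K : MvPolynomial (Fin n) ℂ) (hsym : K.IsSymmetric) (c : ℂ)
    (a b : Fin n) (hab : a ≠ b)
    (h : ∀ v : Fin n → ℂ, v a = c * v b → eval v K = 0)
    (i j : Fin n) (hij : i ≠ j) (v : Fin n → ℂ) (hv : v i = c * v j) : eval v K = 0 := by
  classical
  set s : Equiv.Perm (Fin n) := Equiv.swap a i
  set t : Equiv.Perm (Fin n) := Equiv.swap b (s j)
  set σ : Equiv.Perm (Fin n) := t.trans s
  have hσb : σ b = j := by
    have : t b = s j := Equiv.swap_apply_left b (s j)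
    simp only [σ, Equiv.trans_apply, this]
    exact Equiv.swap_apply_self a i j
  have hta : t a = a := by
    apply Equiv.swap_apply_of_ne_of_ne hab
    intro hasj
    have : s a = s (s j) := congrArg s hasj
    rw [Equiv.swap_apply_self] at this
    rw [Equiv.swap_apply_left] at this
    exact hij this
  have hσa : σ a = i := by
    simp only [σ, Equiv.trans_apply, hta]
    exact Equiv.swap_apply_left a i
  have hK : eval v K = eval (v ∘ σ) K := by
    conv_lhs => rw [← hsym σ]
    rw [eval_rename]
  rw [hK]
  apply h
  simp only [Function.comp_apply, hσa, hσb]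
  exact hv

lemma omega_sq_ne_one : (Complex.exp (2 * Real.pi * Complex.I / 3)) ^ 2 ≠ 1 := by
  intro h
  rw [← Complex.exp_nat_mul] at h
  obtain ⟨m, hm⟩ := Complex.exp_eq_one_iff.mp h
  have hπ : (Real.pi : ℂ) ≠ 0 := by exact_mod_cast Real.pi_ne_zero
  have hI : Complex.I ≠ 0 := Complex.I_ne_zero
  have h4 : (4 : ℂ) * ((Real.pi : ℂ) * Complex.I) = (6 * m) * ((Real.pi : ℂ) * Complex.I) := by
    linear_combination 3 * hm
  have h46 : (4 : ℂ) = 6 * m := mul_right_cancel₀ (mul_ne_zero hπ hI) h4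
  have : (4 : ℤ) = 6 * m := by exact_mod_cast h46
  omega

lemma omega_ne_neg_one : Complex.exp (2 * Real.pi * Complex.I / 3) ≠ -1 := by
  intro h
  apply omega_sq_ne_one
  rw [h]; ring

lemma exp_pi3_sq : Complex.exp (Real.pi * Complex.I / 3) * Complex.exp (Real.pi * Complex.I / 3)
    = Complex.exp (2 * Real.pi * Complex.I / 3) := by
  rw [← Complex.exp_add]
  congr 1
  ring

lemma exp_pi3_inv : Complex.exp (-(Real.pi * Complex.I) / 3) * Complex.exp (Real.pi * Complex.I / 3)
    = 1 := by
  rw [← Complex.exp_add, show -((Real.pi : ℂ) * Complex.I) / 3 + (Real.pi : ℂ) * Complex.I / 3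
    = 0 by ring, Complex.exp_zero]

end

end A2Aux

/-- the kernel subspace of the A₂-tower recursion relations is spanned by
the minimal kernel `∏_{k<l} (X_k+X_l)(X_k−e^{2iπ/3}X_l)(X_l−e^{2iπ/3}X_k)`. -/
theorem A2_tower_kernel_is_minimal (n : ℕ) (hn : 2 ≤ n)
    (K : MvPolynomial (Fin n) ℂ) (hsym : K.IsSymmetric)
    (hhom : K.IsHomogeneous (3 * n * (n - 1) / 2))
    (hkin : ∀ (x : ℂ) (v : Fin n → ℂ),
      eval (fun i : Fin n => if i.val = 0 then -x else if i.val = 1 then x else v i) K = 0)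
    (hfus : ∀ (x : ℂ) (v : Fin n → ℂ),
      eval (fun i : Fin n =>
        if i.val = 0 then Complex.exp (Real.pi * Complex.I / 3) * x
        else if i.val = 1 then Complex.exp (-(Real.pi * Complex.I) / 3) * x
        else v i) K = 0) :
    ∃ c : ℂ, K = C c *
      ∏ p ∈ Finset.univ.filter (fun p : Fin n × Fin n => p.1 < p.2),
        ((X p.1 + X p.2) *
         (X p.1 - C (Complex.exp (2 * Real.pi * Complex.I / 3)) * X p.2) *
         (X p.2 - C (Complex.exp (2 * Real.pi * Complex.I / 3)) * X p.1)) := by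
  classical
  set ω : ℂ := Complex.exp (2 * Real.pi * Complex.I / 3) with hωdef
  have hω0 : ω ≠ 0 := Complex.exp_ne_zero _
  have hωsq : ω ^ 2 ≠ 1 := A2Aux.omega_sq_ne_one
  have hωn1 : ω ≠ -1 := A2Aux.omega_ne_neg_one
  set S : Finset (Fin n × Fin n) :=
    Finset.univ.filter (fun p : Fin n × Fin n => p.1 < p.2) with hSdef
  set P : MvPolynomial (Fin n) ℂ :=
    ∏ p ∈ S, ((X p.1 + X p.2) * (X p.1 - C ω * X p.2) * (X p.2 - C ω * X p.1)) with hPdef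
  -- the two base vanishing statements
  have h0n : 0 < n := by omega
  have h1n : 1 < n := by omega
  have hz : (⟨0, h0n⟩ : Fin n) ≠ ⟨1, h1n⟩ := by
    intro h
    exact absurd (congrArg Fin.val h) (by norm_num)
  have hkin' : ∀ v : Fin n → ℂ, v ⟨0, h0n⟩ = (-1) * v ⟨1, h1n⟩ → eval v K = 0 := by
    intro v hv
    have h := hkin (v ⟨1, h1n⟩) v
    have he : (fun i : Fin n => if i.val = 0 then -(v ⟨1, h1n⟩)
        else if i.val = 1 then v ⟨1, h1n⟩ else v i) = v := by
      funext k
      by_cases hk0 : k.val = 0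
      · have hk : k = ⟨0, h0n⟩ := Fin.ext hk0
        rw [hk, hv]; norm_num
      · by_cases hk1 : k.val = 1
        · have hk : k = ⟨1, h1n⟩ := Fin.ext hk1
          rw [hk]; norm_num
        · simp [hk0, hk1]
    rwa [he] at h
  have hfus' : ∀ v : Fin n → ℂ, v ⟨0, h0n⟩ = ω * v ⟨1, h1n⟩ → eval v K = 0 := by
    intro v hv
    have h := hfus (Complex.exp (Real.pi * Complex.I / 3) * v ⟨1, h1n⟩) v
    have he : (fun i : Fin n =>
        if i.val = 0 then Complex.exp (Real.pi * Complex.I / 3) *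
          (Complex.exp (Real.pi * Complex.I / 3) * v ⟨1, h1n⟩)
        else if i.val = 1 then Complex.exp (-(Real.pi * Complex.I) / 3) *
          (Complex.exp (Real.pi * Complex.I / 3) * v ⟨1, h1n⟩)
        else v i) = v := by
      funext k
      by_cases hk0 : k.val = 0
      · have hk : k = ⟨0, h0n⟩ := Fin.ext hk0
        have hkey : Complex.exp (Real.pi * Complex.I / 3) *
            (Complex.exp (Real.pi * Complex.I / 3) * v ⟨1, h1n⟩) = ω * v ⟨1, h1n⟩ := by
          rw [← mul_assoc, A2Aux.exp_pi3_sq, ← hωdef]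
        rw [hk, hv, hkey]
        norm_num
      · by_cases hk1 : k.val = 1
        · have hk : k = ⟨1, h1n⟩ := Fin.ext hk1
          have hkey : Complex.exp (-(Real.pi * Complex.I) / 3) *
              (Complex.exp (Real.pi * Complex.I / 3) * v ⟨1, h1n⟩) = v ⟨1, h1n⟩ := by
            rw [← mul_assoc, A2Aux.exp_pi3_inv, one_mul]
          rw [hk, hkey]
          norm_num
        · simp [hk0, hk1]
    rwa [he] at h
  -- transferred vanishing statements
  have hvanK : ∀ i j : Fin n, i ≠ j → ∀ v : Fin n → ℂ, v i = (-1) * v j → eval v K = 0 :=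
    fun i j hij v hv => A2Aux.vanish_transfer K hsym (-1) _ _ hz hkin' i j hij v hv
  have hvanF : ∀ i j : Fin n, i ≠ j → ∀ v : Fin n → ℂ, v i = ω * v j → eval v K = 0 :=
    fun i j hij v hv => A2Aux.vanish_transfer K hsym ω _ _ hz hfus' i j hij v hv
  -- the indexed family of linear forms
  set f : (Fin n × Fin n) × Fin 3 → MvPolynomial (Fin n) ℂ := fun q =>
    ![A2Aux.lin q.1.1 q.1.2 (-1), A2Aux.lin q.1.1 q.1.2 ω, A2Aux.lin q.1.2 q.1.1 ω] q.2
    with hfdef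
  set s : Finset ((Fin n × Fin n) × Fin 3) := S ×ˢ Finset.univ with hsdef
  have hmem : ∀ q : (Fin n × Fin n) × Fin 3, q ∈ s → q.1.1 < q.1.2 := by
    intro q hq
    have := (Finset.mem_product.mp hq).1
    exact (Finset.mem_filter.mp this).2
  have hdvd : ∀ q ∈ s, f q ∣ K := by
    rintro ⟨⟨k, l⟩, t⟩ hq
    have hkl : k < l := hmem _ hq
    fin_cases t
    · exact A2Aux.lin_dvd_of_vanishing k l (ne_of_lt hkl) (-1) K (hvanK k l (ne_of_lt hkl))
    · exact A2Aux.lin_dvd_of_vanishing k l (ne_of_lt hkl) ω K (hvanF k l (ne_of_lt hkl))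
    · exact A2Aux.lin_dvd_of_vanishing l k (ne_of_lt hkl).symm ω K (hvanF l k (ne_of_lt hkl).symm)
  have hprime : ∀ q ∈ s, Prime (f q) := by
    rintro ⟨⟨k, l⟩, t⟩ hq
    have hkl : k < l := hmem _ hq
    fin_cases t
    · exact A2Aux.prime_lin k l (ne_of_lt hkl) (-1)
    · exact A2Aux.prime_lin k l (ne_of_lt hkl) ω
    · exact A2Aux.prime_lin l k (ne_of_lt hkl).symm ω
  have hnd : ∀ q ∈ s, ∀ q' ∈ s, q ≠ q' → ¬ f q ∣ f q' := by
    rintro ⟨⟨k, l⟩, t⟩ hq ⟨⟨k', l'⟩, t'⟩ hq' hne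
    have hkl : k < l := hmem _ hq
    have hkl' : k' < l' := hmem _ hq'
    have hklne : k ≠ l := ne_of_lt hkl
    have hklne' : k' ≠ l' := ne_of_lt hkl'
    fin_cases t <;> fin_cases t' <;>
      simp only [hfdef, Matrix.cons_val_zero, Matrix.cons_val_one, Matrix.head_cons,
        Matrix.cons_val_two, Matrix.tail_cons]
    -- (0,0)
    · refine A2Aux.lin_not_dvd_lin hklne hklne' (neg_ne_zero.mpr one_ne_zero) ?_ ?_
      · intro h1 h2 _; apply hne; subst h1; subst h2; rfl
      · intro h1 h2; exfalso; subst h1; subst h2; exact lt_asymm hkl hkl'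
    -- (0,1)
    · refine A2Aux.lin_not_dvd_lin hklne hklne' (neg_ne_zero.mpr one_ne_zero) ?_ ?_
      · intro _ _; exact hωn1
      · intro h1 h2; exfalso; subst h1; subst h2; exact lt_asymm hkl hkl'
    -- (0,2)
    · refine A2Aux.lin_not_dvd_lin hklne hklne'.symm (neg_ne_zero.mpr one_ne_zero) ?_ ?_
      · intro h1 h2; exfalso; subst h1; subst h2; exact lt_asymm hkl hkl'
      · intro h1 h2 hcc; exact hωn1 (by linear_combination -hcc)
    -- (1,0)
    · refine A2Aux.lin_not_dvd_lin hklne hklne' hω0 ?_ ?_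
      · intro _ _; exact Ne.symm hωn1
      · intro h1 h2; exfalso; subst h1; subst h2; exact lt_asymm hkl hkl'
    -- (1,1)
    · refine A2Aux.lin_not_dvd_lin hklne hklne' hω0 ?_ ?_
      · intro h1 h2 _; apply hne; subst h1; subst h2; rfl
      · intro h1 h2; exfalso; subst h1; subst h2; exact lt_asymm hkl hkl'
    -- (1,2)
    · refine A2Aux.lin_not_dvd_lin hklne hklne'.symm hω0 ?_ ?_
      · intro h1 h2; exfalso; subst h1; subst h2; exact lt_asymm hkl hkl'
      · intro h1 h2 hcc; apply hωsq; rw [sq]; exact hcc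
    -- (2,0)
    · refine A2Aux.lin_not_dvd_lin hklne.symm hklne' hω0 ?_ ?_
      · intro h1 h2; exfalso; subst h1; subst h2; exact lt_asymm hkl hkl'
      · intro h1 h2 hcc; exact hωn1 (by linear_combination -hcc)
    -- (2,1)
    · refine A2Aux.lin_not_dvd_lin hklne.symm hklne' hω0 ?_ ?_
      · intro h1 h2; exfalso; subst h1; subst h2; exact lt_asymm hkl hkl'
      · intro h1 h2 hcc; apply hωsq; rw [sq]; exact hcc
    -- (2,2)
    · refine A2Aux.lin_not_dvd_lin hklne.symm hklne'.symm hω0 ?_ ?_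
      · intro h1 h2 _; apply hne; subst h1; subst h2; rfl
      · intro h1 h2; exfalso; subst h1; subst h2; exact lt_asymm hkl hkl'
  have hProd : (∏ q ∈ s, f q) ∣ K := A2Aux.prod_primes_dvd s f K hprime hdvd hnd
  have hPf : P = ∏ q ∈ s, f q := by
    rw [hsdef, Finset.prod_product]
    refine Finset.prod_congr rfl fun p hp => ?_
    rw [Fin.prod_univ_three]
    simp only [hfdef, Matrix.cons_val_zero, Matrix.cons_val_one, Matrix.head_cons,
      Matrix.cons_val_two, Matrix.tail_cons]
    have hC : (C (-1 : ℂ) : MvPolynomial (Fin n) ℂ) = -1 := by simp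
    simp only [A2Aux.lin, hC]
    ring
  have hPdvd : P ∣ K := hPf ▸ hProd
  obtain ⟨Q, hQ⟩ := hPdvd
  by_cases hK0 : K = 0
  · exact ⟨0, by rw [hK0, map_zero, zero_mul]⟩
  have hPne : P ≠ 0 := by
    rw [hPf]
    exact Finset.prod_ne_zero_iff.mpr fun q hq => (hprime q hq).ne_zero
  have hcard : 3 * n * (n - 1) / 2 = S.card * 3 := by
    have h1 : S.card = ∑ b : Fin n, (b.val : ℕ) := by
      rw [hSdef, Finset.card_filter, Fintype.sum_prod_type, Finset.sum_comm]
      refine Finset.sum_congr rfl fun b _ => ?_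
      rw [← Finset.card_filter]
      rw [show Finset.univ.filter (fun a : Fin n => a < b) = Finset.Iio b from by
        ext a; simp, Fin.card_Iio]
    have h2 : (∑ b : Fin n, (b.val : ℕ)) * 2 = n * (n - 1) := by
      rw [Fin.sum_univ_eq_sum_range (fun i => i) n]
      exact Finset.sum_range_id_mul_two n
    calc 3 * n * (n - 1) / 2 = 3 * (n * (n - 1)) / 2 := by rw [mul_assoc]
      _ = 3 * (S.card * 2) / 2 := by rw [← h2, h1]
      _ = S.card * 3 := by omega
  have hPhom : P.IsHomogeneous (3 * n * (n - 1) / 2) := by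
    rw [hcard]
    have hT : ∀ p ∈ S, ((X p.1 + X p.2) * (X p.1 - C ω * X p.2) *
        (X p.2 - C ω * X p.1) : MvPolynomial (Fin n) ℂ).IsHomogeneous 3 := by
      intro p _
      have h1 : (X p.1 + X p.2 : MvPolynomial (Fin n) ℂ).IsHomogeneous 1 :=
        (isHomogeneous_X ℂ p.1).add (isHomogeneous_X ℂ p.2)
      have h2 : (X p.1 - C ω * X p.2 : MvPolynomial (Fin n) ℂ).IsHomogeneous 1 :=
        (isHomogeneous_X ℂ p.1).sub (isHomogeneous_C_mul_X ω p.2)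
      have h3 : (X p.2 - C ω * X p.1 : MvPolynomial (Fin n) ℂ).IsHomogeneous 1 :=
        (isHomogeneous_X ℂ p.2).sub (isHomogeneous_C_mul_X ω p.1)
      simpa using (h1.mul h2).mul h3
    have h := IsHomogeneous.prod S _ (fun _ => 3) hT
    rwa [Finset.sum_const, smul_eq_mul] at h
  have hQ0 : ∀ d : ℕ, d ≠ 0 → homogeneousComponent d Q = 0 := by
    intro d hd
    by_cases hdt : Q.totalDegree < d
    · exact homogeneousComponent_eq_zero d Q hdt
    push_neg at hdt
    have hsum : K = ∑ e ∈ Finset.range (Q.totalDegree + 1), P * homogeneousComponent e Q := by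
      rw [hQ, ← Finset.mul_sum, sum_homogeneousComponent]
    have hcomp := congrArg (homogeneousComponent (3 * n * (n - 1) / 2 + d)) hsum
    rw [map_sum] at hcomp
    have hKmem : K ∈ homogeneousSubmodule (Fin n) ℂ (3 * n * (n - 1) / 2) :=
      (mem_homogeneousSubmodule _ _).mpr hhom
    rw [homogeneousComponent_of_mem hKmem, if_neg (by omega)] at hcomp
    have hterm : ∀ e ∈ Finset.range (Q.totalDegree + 1),
        homogeneousComponent (3 * n * (n - 1) / 2 + d) (P * homogeneousComponent e Q)
        = if d = e then P * homogeneousComponent e Q else 0 := by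
      intro e _
      rw [homogeneousComponent_of_mem ((mem_homogeneousSubmodule _ _).mpr
        (hPhom.mul (homogeneousComponent_isHomogeneous e Q)))]
      simp only [Nat.add_right_cancel_iff, add_right_inj]
    rw [Finset.sum_congr rfl hterm, Finset.sum_ite_eq,
      if_pos (Finset.mem_range.mpr (by omega))] at hcomp
    exact (mul_eq_zero.mp hcomp.symm).resolve_left hPne
  have hQc : ∃ c : ℂ, Q = C c := by
    refine ⟨coeff 0 Q, ?_⟩
    calc Q = ∑ i ∈ Finset.range (Q.totalDegree + 1), homogeneousComponent i Q :=
        (sum_homogeneousComponent Q).symm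
      _ = homogeneousComponent 0 Q :=
        Finset.sum_eq_single_of_mem 0 (Finset.mem_range.mpr (by omega))
          (fun e _ he => hQ0 e he)
      _ = C (coeff 0 Q) := homogeneousComponent_zero Q
  obtain ⟨c, hc⟩ := hQc
  exact ⟨c, by rw [hQ, hc, mul_comm]⟩
end

section
/- Set φ₁ = 11π/18, φ₂ = 7π/18, φ₃ = 4π/18 and α₁ = π/18, α₂ = 5π/18, α₃ = 6π/18. There is no integer q such that cos φ₁ / cos φ₂ = (cos α₁ / cos α₂)^q, cos φ₁ / cos φ₃ = (cos α₁ / cos α₃)^q, and cos φ₂ / cos φ₃ = (cos α₂ / cos α₃)^q hold simultaneously. -/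
open Real

/-! Already the first equation fails on signs: `11π/18 > π/2`, so its left side is negative,
while its right side is an integer power of a positive number. -/

theorem ne_zpow_of_neg_of_pos {K : Type*} [Field K] [LinearOrder K] [IsStrictOrderedRing K]
    {x y : K} (hy : y < 0) (hx : 0 < x) (q : ℤ) : y ≠ x ^ q :=
  (hy.trans (zpow_pos hx q)).ne

/-- Sub-case 3/A: the three sum-of-roots relations at the fusion angles
admit no common integer solution `q`. -/
theorem no_integer_power_subcase3A : ¬ ∃ q : ℤ,
    cos (11 * π / 18) / cos (7 * π / 18) = (cos (π / 18) / cos (5 * π / 18)) ^ q ∧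
    cos (11 * π / 18) / cos (4 * π / 18) = (cos (π / 18) / cos (6 * π / 18)) ^ q ∧
    cos (7 * π / 18) / cos (4 * π / 18) = (cos (5 * π / 18) / cos (6 * π / 18)) ^ q := by
  rintro ⟨q, h, -, -⟩
  have hπ := pi_pos
  have h11 : cos (11 * π / 18) < 0 :=
    cos_neg_of_pi_div_two_lt_of_lt (by linarith) (by linarith)
  have h7 : 0 < cos (7 * π / 18) := cos_pos_of_mem_Ioo ⟨by linarith, by linarith⟩
  have h1 : 0 < cos (π / 18) := cos_pos_of_mem_Ioo ⟨by linarith, by linarith⟩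
  have h5 : 0 < cos (5 * π / 18) := cos_pos_of_mem_Ioo ⟨by linarith, by linarith⟩
  exact ne_zpow_of_neg_of_pos (div_neg_of_neg_of_pos h11 h7) (div_pos h1 h5) q h
end

section
/- Set φ₁ = 11π/18, φ₂ = 7π/18, φ₃ = 4π/18 and α₁ = π/18, α₂ = 5π/18, α₃ = 6π/18. There exist no integer q and real number r with cos φ₁ + r ≠ 0, cos φ₂ + r ≠ 0, cos φ₃ + r ≠ 0 such that (cos φ₁ + r)/(cos φ₂ + r) = (cos α₁ / cos α₂)^q, (cos φ₁ + r)/(cos φ₃ + r) = (cos α₁ / cos α₃)^q, and (cos φ₂ + r)/(cos φ₃ + r) = (cos α₂ / cos α₃)^q hold simultaneously. -/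
open Real

private lemma sqrt3_lb : (1.73205 : ℝ) < Real.sqrt 3 := by
  have : (1.73205 : ℝ) = Real.sqrt (1.73205 ^ 2) := (Real.sqrt_sq (by norm_num)).symm
  rw [this]
  exact Real.sqrt_lt_sqrt (by positivity) (by norm_num)

private lemma sqrt3_ub : Real.sqrt 3 < 1.73206 := by
  have : (1.73206 : ℝ) = Real.sqrt (1.73206 ^ 2) := (Real.sqrt_sq (by norm_num)).symm
  rw [this]
  exact Real.sqrt_lt_sqrt (by norm_num) (by norm_num)

private lemma c10_bounds : 0.9848 < cos (π / 18) ∧ cos (π / 18) < 0.98482 := by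
  have hπ := Real.pi_pos
  have h3 : (3 : ℝ) * (π / 18) = π / 6 := by ring
  have hcube : 4 * cos (π / 18) ^ 3 - 3 * cos (π / 18) = Real.sqrt 3 / 2 := by
    rw [← Real.cos_three_mul, h3, Real.cos_pi_div_six]
  have hlb : (1 : ℝ) / 2 < cos (π / 18) := by
    have := Real.cos_lt_cos_of_nonneg_of_le_pi (x := π / 18) (y := π / 3)
      (by positivity) (by linarith) (by linarith)
    rwa [Real.cos_pi_div_three] at this
  have hub : cos (π / 18) ≤ 1 := Real.cos_le_one _
  have h1 := sqrt3_lb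
  have h2 := sqrt3_ub
  set x := cos (π / 18)
  constructor
  · nlinarith [sq_nonneg (x - 0.9848), sq_nonneg (x + 0.9848), sq_nonneg x]
  · nlinarith [sq_nonneg (x - 0.98482), sq_nonneg (x + 0.98482), sq_nonneg x]

private lemma c40_bounds : 0.766 < cos (4 * π / 18) ∧ cos (4 * π / 18) < 0.7661 := by
  have hπ := Real.pi_pos
  have h3 : (3 : ℝ) * (4 * π / 18) = π - π / 3 := by ring
  have hcube : 4 * cos (4 * π / 18) ^ 3 - 3 * cos (4 * π / 18) = -(1 / 2) := by
    rw [← Real.cos_three_mul, h3, Real.cos_pi_sub, Real.cos_pi_div_three]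
  have hlb : (1 : ℝ) / 2 < cos (4 * π / 18) := by
    have := Real.cos_lt_cos_of_nonneg_of_le_pi (x := 4 * π / 18) (y := π / 3)
      (by positivity) (by linarith) (by linarith)
    rwa [Real.cos_pi_div_three] at this
  have hub : cos (4 * π / 18) ≤ 1 := Real.cos_le_one _
  set x := cos (4 * π / 18)
  constructor
  · nlinarith [sq_nonneg (x - 0.766), sq_nonneg (x + 0.766), sq_nonneg x]
  · nlinarith [sq_nonneg (x - 0.7661), sq_nonneg (x + 0.7661), sq_nonneg x]

private lemma c50_bounds : 0.6427 < cos (5 * π / 18) ∧ cos (5 * π / 18) < 0.6429 := by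
  have hπ := Real.pi_pos
  have h3 : (3 : ℝ) * (5 * π / 18) = π - π / 6 := by ring
  have hcube : 4 * cos (5 * π / 18) ^ 3 - 3 * cos (5 * π / 18) = -(Real.sqrt 3 / 2) := by
    rw [← Real.cos_three_mul, h3, Real.cos_pi_sub, Real.cos_pi_div_six]
  have hlb : (1 : ℝ) / 2 < cos (5 * π / 18) := by
    have := Real.cos_lt_cos_of_nonneg_of_le_pi (x := 5 * π / 18) (y := π / 3)
      (by positivity) (by linarith) (by linarith)
    rwa [Real.cos_pi_div_three] at this
  have hub : cos (5 * π / 18) ≤ 1 := Real.cos_le_one _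
  have h1 := sqrt3_lb
  have h2 := sqrt3_ub
  set x := cos (5 * π / 18)
  constructor
  · nlinarith [sq_nonneg (x - 0.6427), sq_nonneg (x + 0.6427), sq_nonneg x]
  · nlinarith [sq_nonneg (x - 0.6429), sq_nonneg (x + 0.6429), sq_nonneg x]

private lemma c70_bounds : 0.342 < cos (7 * π / 18) ∧ cos (7 * π / 18) < 0.3421 := by
  have hπ := Real.pi_pos
  have h3 : (3 : ℝ) * (7 * π / 18) = π - -(π / 6) := by ring
  have hcube : 4 * cos (7 * π / 18) ^ 3 - 3 * cos (7 * π / 18) = -(Real.sqrt 3 / 2) := by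
    rw [← Real.cos_three_mul, h3, Real.cos_pi_sub, Real.cos_neg, Real.cos_pi_div_six]
  have hlb : 0 < cos (7 * π / 18) :=
    Real.cos_pos_of_mem_Ioo ⟨by linarith, by linarith⟩
  have hub : cos (7 * π / 18) < 1 / 2 := by
    have := Real.cos_lt_cos_of_nonneg_of_le_pi (x := π / 3) (y := 7 * π / 18)
      (by positivity) (by linarith) (by linarith)
    rwa [Real.cos_pi_div_three] at this
  have h1 := sqrt3_lb
  have h2 := sqrt3_ub
  set x := cos (7 * π / 18)
  constructor
  · nlinarith [sq_nonneg (x - 0.342), sq_nonneg (x + 0.342), sq_nonneg x]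
  · nlinarith [sq_nonneg (x - 0.3421), sq_nonneg (x + 0.3421), sq_nonneg x]

/-- Positive exponents: `s * C^(n+1) - d * B^(n+1) < s - d`, plus `3/2 * C^(n+1) ≤ B^(n+1)`. -/
private lemma key_pos (d s B C : ℝ)
    (hd1 : 0.4239 < d) (hd2 : d < 0.4241)
    (hs1 : 1.108 < s) (hs2 : s < 1.1082)
    (hB1 : 1.9696 < B) (hB2 : B < 1.9698)
    (hC1 : 1.2854 < C) (hC2 : C < 1.2858) :
    ∀ n : ℕ, s * C ^ (n + 1) - d * B ^ (n + 1) < s - d ∧ 3 / 2 * C ^ (n + 1) ≤ B ^ (n + 1) := by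
  intro n
  induction n with
  | zero => constructor <;> · simp only [zero_add, pow_one]; nlinarith
  | succ n ih =>
    obtain ⟨h1, h2⟩ := ih
    have hCx : C ≤ C ^ (n + 1) := le_self_pow₀ (by linarith) (by omega)
    have hCpos : (0 : ℝ) < C ^ (n + 1) := by positivity
    have hBpos : (0 : ℝ) < B ^ (n + 1) := by positivity
    rw [pow_succ C (n+1), pow_succ B (n+1)]
    constructor
    · have P1 : (s * C ^ (n+1) - d * B ^ (n+1)) * C < (s - d) * C :=
        mul_lt_mul_of_pos_right h1 (by linarith)
      have P2 : d * (B - C) * (3 / 2 * C ^ (n+1)) ≤ d * (B - C) * B ^ (n+1) :=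
        mul_le_mul_of_nonneg_left h2 (by nlinarith)
      have P2' : 3 / 2 * d * (B - C) * C ≤ 3 / 2 * d * (B - C) * C ^ (n+1) :=
        mul_le_mul_of_nonneg_left hCx (by nlinarith)
      have P3 : (s - d) * (C - 1) ≤ 3 / 2 * d * C * (B - C) := by
        have hx1 : (0.4239 : ℝ) * 1.2854 < d * C := by nlinarith
        have hx2 : d * C * 0.6838 < d * C * (B - C) :=
          mul_lt_mul_of_pos_left (by linarith) (by nlinarith)
        have hx3 : (s - d) * (C - 1) < 0.6843 * 0.2858 := by
          nlinarith [mul_pos (show (0:ℝ) < 0.6843 - (s - d) by linarith)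
            (show (0:ℝ) < 0.2858 - (C - 1) by linarith)]
        linarith [hx1, hx2, hx3]
      linarith [P1, P2, P2', P3]
    · have P4 : 3 / 2 * C ^ (n+1) * C ≤ B ^ (n+1) * C :=
        mul_le_mul_of_nonneg_right h2 (by linarith)
      have P5 : B ^ (n+1) * C ≤ B ^ (n+1) * B :=
        mul_le_mul_of_nonneg_left (by linarith) (le_of_lt hBpos)
      linarith

/-- Negative exponents, with `u = C⁻¹`, `v = B⁻¹`. -/
private lemma key_neg (d s u v : ℝ)
    (hd1 : 0.4239 < d) (hd2 : d < 0.4241)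
    (hs1 : 1.108 < s) (hs2 : s < 1.1082)
    (hu1 : 0.7777 < u) (hu2 : u < 0.778)
    (hv1 : 0.5076 < v) (hv2 : v < 0.5078) :
    ∀ n : ℕ, s * u ^ (n + 1) - d * v ^ (n + 1) < s - d ∧ v ^ (n + 1) ≤ u ^ (n + 1) := by
  intro n
  induction n with
  | zero => constructor <;> · simp only [zero_add, pow_one]; nlinarith
  | succ n ih =>
    obtain ⟨h1, h2⟩ := ih
    have hupos : (0 : ℝ) < u ^ (n + 1) := by positivity
    have hvpos : (0 : ℝ) < v ^ (n + 1) := by positivity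
    rw [pow_succ u (n+1), pow_succ v (n+1)]
    constructor
    · have Q1 : d * (1 - v) * v ^ (n+1) ≤ d * (1 - v) * u ^ (n+1) :=
        mul_le_mul_of_nonneg_left h2 (by nlinarith)
      have Q2 : u ^ (n+1) * (d * (1 - v)) ≤ u ^ (n+1) * (s * (1 - u)) :=
        mul_le_mul_of_nonneg_left (by nlinarith) (le_of_lt hupos)
      linarith [h1, Q1, Q2]
    · have Q3 : v ^ (n+1) * v ≤ u ^ (n+1) * v :=
        mul_le_mul_of_nonneg_right h2 (by linarith)
      have Q4 : u ^ (n+1) * v ≤ u ^ (n+1) * u :=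
        mul_le_mul_of_nonneg_left (by linarith) (le_of_lt hupos)
      linarith

/-- Sub-case 3/B: the shifted sum-of-roots relations at the fusion angles
admit no common solution with `q` an integer and `r` real. -/
theorem no_integer_power_subcase3B : ¬ ∃ (q : ℤ) (r : ℝ),
    cos (11 * π / 18) + r ≠ 0 ∧ cos (7 * π / 18) + r ≠ 0 ∧ cos (4 * π / 18) + r ≠ 0 ∧
    (cos (11 * π / 18) + r) / (cos (7 * π / 18) + r)
      = (cos (π / 18) / cos (5 * π / 18)) ^ q ∧
    (cos (11 * π / 18) + r) / (cos (4 * π / 18) + r)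
      = (cos (π / 18) / cos (6 * π / 18)) ^ q ∧
    (cos (7 * π / 18) + r) / (cos (4 * π / 18) + r)
      = (cos (5 * π / 18) / cos (6 * π / 18)) ^ q := by
  rintro ⟨q, r, hb1, hb2, hb3, e1, e2, e3⟩
  obtain ⟨h10a, h10b⟩ := c10_bounds
  obtain ⟨h40a, h40b⟩ := c40_bounds
  obtain ⟨h50a, h50b⟩ := c50_bounds
  obtain ⟨h70a, h70b⟩ := c70_bounds
  -- cos (11π/18) = -cos (7π/18)
  have h11 : cos (11 * π / 18) = -cos (7 * π / 18) := by
    rw [show (11 : ℝ) * π / 18 = π - 7 * π / 18 by ring, Real.cos_pi_sub]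
  -- cos (6π/18) = 1/2
  have h6 : cos (6 * π / 18) = 1 / 2 := by
    rw [show (6 : ℝ) * π / 18 = π / 3 by ring, Real.cos_pi_div_three]
  set c10 := cos (π / 18)
  set c40 := cos (4 * π / 18)
  set c50 := cos (5 * π / 18)
  set c70 := cos (7 * π / 18)
  set B : ℝ := 2 * c10 with hBdef
  set C : ℝ := 2 * c50 with hCdef
  have hBq : (c10 / cos (6 * π / 18)) ^ q = B ^ q := by
    rw [h6, show c10 / (1 / 2) = 2 * c10 by ring, hBdef]
  have hCq : (c50 / cos (6 * π / 18)) ^ q = C ^ q := by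
    rw [h6, show c50 / (1 / 2) = 2 * c50 by ring, hCdef]
  set t : ℝ := c40 + r with htdef
  set d : ℝ := c40 - c70 with hddef
  set s : ℝ := c40 + c70 with hsdef
  -- from e2 : t - s = B^q * t
  have heB : t - s = B ^ q * t := by
    have := (div_eq_iff hb3).mp e2
    rw [hBq] at this
    rw [htdef, hsdef, ← this, h11]; ring
  -- from e3 : t - d = C^q * t
  have heC : t - d = C ^ q * t := by
    have := (div_eq_iff hb3).mp e3
    rw [hCq] at this
    rw [htdef, hddef, ← this]; ring
  have hsEq : s = (1 - B ^ q) * t := by linarith [heB]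
  have hdEq : d = (1 - C ^ q) * t := by linarith [heC]
  have hspos : (0 : ℝ) < s := by rw [hsdef]; linarith
  -- key equation: d * (1 - B^q) = s * (1 - C^q)
  have hK : d * (1 - B ^ q) = s * (1 - C ^ q) := by
    rw [hsEq, hdEq]; ring
  have hKey : s * C ^ q - d * B ^ q = s - d := by linarith [hK, mul_comm d (1 - B ^ q)]
  -- bounds for B, C
  have hB1 : (1.9696 : ℝ) < B := by rw [hBdef]; linarith
  have hB2 : B < 1.9698 := by rw [hBdef]; linarith
  have hC1 : (1.2854 : ℝ) < C := by rw [hCdef]; linarith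
  have hC2 : C < 1.2858 := by rw [hCdef]; linarith
  have hd1 : (0.4239 : ℝ) < d := by rw [hddef]; linarith
  have hd2 : d < 0.4241 := by rw [hddef]; linarith
  have hs1 : (1.108 : ℝ) < s := by rw [hsdef]; linarith
  have hs2 : s < 1.1082 := by rw [hsdef]; linarith
  have hBpos : (0 : ℝ) < B := by linarith
  have hCpos : (0 : ℝ) < C := by linarith
  -- case split on q
  rcases lt_trichotomy q 0 with hq | hq | hq
  · -- q negative: q = -(n+1)
    obtain ⟨n, hn⟩ : ∃ n : ℕ, q = -((n : ℤ) + 1) := by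
      refine ⟨(-q).toNat - 1, ?_⟩; omega
    have hcast : -((n : ℤ) + 1) = -((n + 1 : ℕ) : ℤ) := by push_cast; ring
    have hCz : C ^ q = (C⁻¹) ^ (n + 1) := by
      rw [hn, hcast, zpow_neg, zpow_natCast, inv_pow]
    have hBz : B ^ q = (B⁻¹) ^ (n + 1) := by
      rw [hn, hcast, zpow_neg, zpow_natCast, inv_pow]
    have hu1 : (0.7777 : ℝ) < C⁻¹ := by
      rw [lt_inv_comm₀ (by norm_num) hCpos]; calc C < 1.2858 := hC2
                                                 _ < 0.7777⁻¹ := by norm_num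
    have hu2 : C⁻¹ < 0.778 := by
      rw [inv_lt_comm₀ hCpos (by norm_num)]; calc (0.778 : ℝ)⁻¹ < 1.2854 := by norm_num
                                                  _ < C := hC1
    have hv1 : (0.5076 : ℝ) < B⁻¹ := by
      rw [lt_inv_comm₀ (by norm_num) hBpos]; calc B < 1.9698 := hB2
                                                 _ < 0.5076⁻¹ := by norm_num
    have hv2 : B⁻¹ < 0.5078 := by
      rw [inv_lt_comm₀ hBpos (by norm_num)]; calc (0.5078 : ℝ)⁻¹ < 1.9696 := by norm_num
                                                  _ < B := hB1
    have := (key_neg d s C⁻¹ B⁻¹ hd1 hd2 hs1 hs2 hu1 hu2 hv1 hv2 n).1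
    rw [← hCz, ← hBz] at this
    linarith
  · -- q = 0 : then s = 0, contradiction
    rw [hq] at hsEq
    simp at hsEq
    linarith
  · -- q positive: q = n+1
    obtain ⟨n, hn⟩ : ∃ n : ℕ, q = (n : ℤ) + 1 := ⟨(q - 1).toNat, by omega⟩
    have hcast : (n : ℤ) + 1 = ((n + 1 : ℕ) : ℤ) := by push_cast; ring
    have hCz : C ^ q = C ^ (n + 1) := by rw [hn, hcast, zpow_natCast]
    have hBz : B ^ q = B ^ (n + 1) := by rw [hn, hcast, zpow_natCast]
    have := (key_pos d s B C hd1 hd2 hs1 hs2 hB1 hB2 hC1 hC2 n).1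
    rw [← hCz, ← hBz] at this
    linarith
end

section
/- Define f_α(θ) = tanh(½(θ + iπα))/tanh(½(θ − iπα)) for complex θ, and let S₁₁(θ) = −f_{10/18}(θ) · f_{2/18}(θ) be the A₁A₁ scattering amplitude of the E₇ model. Then (θ − 10iπ/18) · S₁₁(θ) tends to i · 2√3 · (cos(π/18)/sin(π/18)) · (cos(2π/9)/sin(2π/9)) as θ → 10iπ/18 (limit along complex θ ≠ 10iπ/18). Equivalently, the residue of S₁₁ at the A₂ bound state pole equals i·|Γ₁₁²|² with |Γ₁₁²|² = 2√3 · cot(π/18) · cot(2π/9). -/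
open Filter

/-- The S-matrix building block `f_α(θ) = tanh(½(θ+iπα))/tanh(½(θ−iπα))`. -/
noncomputable def fblock (α : ℝ) (θ : ℂ) : ℂ :=
  Complex.tanh ((θ + Complex.I * (Real.pi : ℂ) * (α : ℂ)) / 2) /
    Complex.tanh ((θ - Complex.I * (Real.pi : ℂ) * (α : ℂ)) / 2)

/-- The A₁A₁ scattering amplitude of the E₇ model, `S₁₁ = −f_{10/18}·f_{2/18}`. -/
noncomputable def S11 (θ : ℂ) : ℂ := -fblock (10 / 18) θ * fblock (2 / 18) θ

/-!
At `θ₀ = iπα` the denominator `tanh((θ - θ₀)/2)` of `f_α` has a simple zero with derivative `1/2`,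
while its numerator is `tanh(iπα) = i tan(πα)`; hence `(θ - θ₀) f_α(θ) → 2i tan(πα)`.
The second block `f_{2/18}` is regular at `θ₀ = 10iπ/18` with value `tan(π/3) / tan(2π/9)`, so the
residue is `-2i tan(10π/18) √3 / tan(2π/9)`, and `tan(π/2 + π/18) = -cot(π/18)`.
-/

open Complex Topology
open scoped Real

theorem Complex.hasDerivAt_tanh {z : ℂ} (hz : cosh z ≠ 0) :
    HasDerivAt tanh (1 / cosh z ^ 2) z := by
  have h := (hasDerivAt_sinh z).div (hasDerivAt_cosh z) hz
  rw [mul_comm (sinh z), ← sq, ← sq, cosh_sq_sub_sinh_sq] at h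
  exact h.congr_of_eventuallyEq (.of_forall fun w => tanh_eq_sinh_div_cosh w)

theorem Complex.continuousAt_tanh {z : ℂ} (hz : cosh z ≠ 0) : ContinuousAt tanh z :=
  (hasDerivAt_tanh hz).continuousAt

theorem Complex.cosh_ne_zero_of_tanh_ne_zero {z : ℂ} (hz : tanh z ≠ 0) : cosh z ≠ 0 := by
  contrapose! hz
  rw [tanh_eq_sinh_div_cosh, hz, div_zero]

theorem Complex.tendsto_sub_div_tanh_half_sub (z₀ : ℂ) :
    Tendsto (fun z => (z - z₀) / tanh ((z - z₀) / 2)) (𝓝[≠] z₀) (𝓝 2) := by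
  have hderiv : HasDerivAt (fun z => tanh ((z - z₀) / 2)) (1 / 2) z₀ := by
    have hlin : HasDerivAt (fun z : ℂ => (z - z₀) / 2) (1 / 2) z₀ :=
      ((hasDerivAt_id z₀).sub_const z₀).div_const 2
    have htanh := (hasDerivAt_tanh (z := 0) (by simp)).comp_of_eq z₀ hlin (by simp)
    simpa [Function.comp_def] using htanh
  have hslope := (hasDerivAt_iff_tendsto_slope.mp hderiv).inv₀ (by norm_num)
  rw [one_div, inv_inv] at hslope
  refine hslope.congr fun z => ?_
  simp [slope_def_field]

theorem Complex.tanh_I_mul_ofReal (x : ℝ) : tanh (I * x) = Real.tan x * I := by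
  rw [mul_comm, tanh_mul_I, ofReal_tan]

theorem Complex.cosh_I_mul_ofReal (x : ℝ) : cosh (I * x) = Real.cos x := by
  rw [mul_comm, cosh_mul_I, ofReal_cos]

theorem I_mul_pi_mul_add_div_two (α β : ℝ) :
    (I * π * α + I * π * β) / 2 = I * (π * ((α + β) / 2) : ℝ) := by
  push_cast; ring

theorem I_mul_pi_mul_sub_div_two (α β : ℝ) :
    (I * π * α - I * π * β) / 2 = I * (π * ((α - β) / 2) : ℝ) := by
  push_cast; ring

theorem fblock_I_mul_pi_mul (α β : ℝ) :
    fblock β (I * π * α) = (Real.tan (π * ((α + β) / 2)) / Real.tan (π * ((α - β) / 2)) : ℝ) := by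
  rw [fblock, I_mul_pi_mul_add_div_two, I_mul_pi_mul_sub_div_two, tanh_I_mul_ofReal,
    tanh_I_mul_ofReal, mul_div_mul_right _ _ I_ne_zero, ofReal_div]

theorem continuousAt_fblock_I_mul_pi_mul {α β : ℝ} (hnum : Real.cos (π * ((α + β) / 2)) ≠ 0)
    (hden : Real.tan (π * ((α - β) / 2)) ≠ 0) : ContinuousAt (fblock β) (I * π * α) := by
  have hcosh : cosh ((I * π * α + I * π * β) / 2) ≠ 0 := by
    rwa [I_mul_pi_mul_add_div_two, cosh_I_mul_ofReal, ofReal_ne_zero]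
  have htanh : tanh ((I * π * α - I * π * β) / 2) ≠ 0 := by
    rw [I_mul_pi_mul_sub_div_two, tanh_I_mul_ofReal]
    exact mul_ne_zero (ofReal_ne_zero.mpr hden) I_ne_zero
  have hnum' := (continuousAt_tanh hcosh).comp (f := fun θ => (θ + I * π * β) / 2) (by fun_prop)
  have hden' := (continuousAt_tanh (cosh_ne_zero_of_tanh_ne_zero htanh)).comp
    (f := fun θ => (θ - I * π * β) / 2) (by fun_prop)
  exact hnum'.div hden' htanh

theorem tendsto_sub_mul_fblock {α : ℝ} (hα : Real.cos (π * α) ≠ 0) :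
    Tendsto (fun θ => (θ - I * π * α) * fblock α θ) (𝓝[≠] (I * π * α))
      (𝓝 (2 * (Real.tan (π * α) * I))) := by
  have hθ₀ : I * π * α = I * (π * α : ℝ) := by push_cast; ring
  have hnum : ContinuousAt (fun θ => tanh ((θ + I * π * α) / 2)) (I * π * α) := by
    refine (continuousAt_tanh ?_).comp (f := fun θ => (θ + I * π * α) / 2) (by fun_prop)
    rwa [add_self_div_two, hθ₀, cosh_I_mul_ofReal, ofReal_ne_zero]
  have hval : tanh ((I * π * α + I * π * α) / 2) = Real.tan (π * α) * I := by
    rw [add_self_div_two, hθ₀, tanh_I_mul_ofReal]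
  have hlim := (tendsto_sub_div_tanh_half_sub _).mul (hnum.tendsto.mono_left nhdsWithin_le_nhds)
  rw [hval] at hlim
  refine hlim.congr fun θ => ?_
  simp only [fblock]
  ring

theorem neg_two_tan_mul_tan_div_tan_eq_two_sqrt_three_mul_cot_mul_cot :
    -(2 * Real.tan (π * (10 / 18))) * (Real.tan (π / 3) / Real.tan (2 * π / 9)) =
      2 * √3 * (Real.cos (π / 18) / Real.sin (π / 18)) *
        (Real.cos (2 * π / 9) / Real.sin (2 * π / 9)) := by
  have h : Real.tan (π * (10 / 18)) = -(Real.tan (π / 18))⁻¹ := by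
    rw [show π * (10 / 18) = π / 2 - -(π / 18) by ring, Real.tan_pi_div_two_sub, Real.tan_neg,
      inv_neg]
  rw [h, Real.tan_pi_div_three, Real.tan_eq_sin_div_cos, Real.tan_eq_sin_div_cos]
  field_simp

/-- the residue of `S₁₁` at the A₂ bound state pole `θ = 10iπ/18` equals
`i·|Γ₁₁²|²` with `|Γ₁₁²|² = 2√3·cot(π/18)·cot(2π/9)`. -/
theorem S11_residue_at_A2 :
    Tendsto (fun θ : ℂ => (θ - 10 * (Real.pi : ℂ) * Complex.I / 18) * S11 θ)
      (nhdsWithin (10 * (Real.pi : ℂ) * Complex.I / 18)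
        {(10 * (Real.pi : ℂ) * Complex.I / 18 : ℂ)}ᶜ)
      (nhds (Complex.I *
        ((2 * Real.sqrt 3 * (Real.cos (Real.pi / 18) / Real.sin (Real.pi / 18)) *
          (Real.cos (2 * Real.pi / 9) / Real.sin (2 * Real.pi / 9)) : ℝ) : ℂ))) := by
  have hpole : 10 * (π : ℂ) * I / 18 = I * π * ((10 / 18 : ℝ) : ℂ) := by push_cast; ring
  have hsum : π * ((10 / 18 + 2 / 18) / 2) = π / 3 := by ring
  have hdiff : π * ((10 / 18 - 2 / 18) / 2) = 2 * π / 9 := by ring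
  have hcos : Real.cos (π * (10 / 18)) ≠ 0 :=
    (Real.cos_neg_of_pi_div_two_lt_of_lt (by linarith [Real.pi_pos]) (by linarith [Real.pi_pos])).ne
  have hcont : ContinuousAt (fblock (2 / 18)) (I * π * ((10 / 18 : ℝ) : ℂ)) := by
    refine continuousAt_fblock_I_mul_pi_mul ?_ ?_
    · rw [hsum, Real.cos_pi_div_three]; norm_num
    · rw [hdiff]
      exact (Real.tan_pos_of_pos_of_lt_pi_div_two (by positivity) (by linarith [Real.pi_pos])).ne'
  have hlim := (tendsto_sub_mul_fblock hcos).neg.mul (hcont.tendsto.mono_left nhdsWithin_le_nhds)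
  rw [fblock_I_mul_pi_mul, hsum, hdiff] at hlim
  rw [hpole, ← neg_two_tan_mul_tan_div_tan_eq_two_sqrt_three_mul_cot_mul_cot]
  convert hlim using 2
  · simp only [S11]; ring
  · push_cast; ring
end

section
/- For every real x, 2 ∫₀^∞ sin²(x t/(2π)) / (t · sinh t) dt = log(cosh(x/2)), where the integral is an absolutely convergent Lebesgue integral over (0,∞). -/
/-!
With `a = x / (2π)`, expanding `1 / sinh t = 2 ∑ₙ e^{-(2n+1)t}` splits the integral into the terms
`2 ∫₀^∞ sin²(at) e^{-ct} / t dt = ½ log (1 + (2a/c)²)`, `c = 2n + 1`. Each term is computed by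
differentiating in `a`, which leaves the Laplace transform `2a / (c² + 4a²)` of `sin (2at)`.
The sum of the logarithms is the logarithm of Euler's product
`cosh (πy/2) = ∏ₖ (1 + y² / (2k+1)²)` at `y = 2a`, which follows from the sine product and
`sin (πz) = 2 sin (πz/2) cos (πz/2)`. All terms are nonnegative, which justifies exchanging sum and
integral and also gives integrability.
-/

open MeasureTheory Real Set Filter Topology Finset

theorem Finset.prod_range_two_mul {M : Type*} [CommMonoid M] (f : ℕ → M) (n : ℕ) :
    ∏ j ∈ range (2 * n), f j = (∏ k ∈ range n, f (2 * k)) * ∏ k ∈ range n, f (2 * k + 1) := by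
  induction n with
  | zero => simp
  | succ n ih =>
    rw [Nat.mul_succ, prod_range_succ, prod_range_succ, ih, prod_range_succ, prod_range_succ]
    ac_rfl

theorem Complex.tendsto_euler_cos_prod {z : ℂ} (hz : Complex.sin (π * z / 2) ≠ 0) :
    Tendsto (fun n : ℕ => ∏ k ∈ range n, (1 - z ^ 2 / (2 * k + 1) ^ 2)) atTop
      (𝓝 (Complex.cos (π * z / 2))) := by
  have hsin := (Complex.tendsto_euler_sin_prod z).comp (tendsto_id.const_mul_atTop' two_pos)
  have hsin_half := (Complex.tendsto_euler_sin_prod (z / 2)).const_mul 2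
  rw [← mul_div_assoc] at hsin_half
  have hne : 2 * Complex.sin (π * z / 2) ≠ 0 := mul_ne_zero two_ne_zero hz
  have hsplit (n : ℕ) : π * z * ∏ j ∈ range (2 * n), (1 - z ^ 2 / ((j : ℂ) + 1) ^ 2) =
      2 * (π * z / 2 * ∏ j ∈ range n, (1 - (z / 2) ^ 2 / ((j : ℂ) + 1) ^ 2)) *
        ∏ k ∈ range n, (1 - z ^ 2 / (2 * k + 1) ^ 2) := by
    have hodd : ∏ k ∈ range n, (1 - z ^ 2 / (((2 * k + 1 : ℕ) : ℂ) + 1) ^ 2) =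
        ∏ k ∈ range n, (1 - (z / 2) ^ 2 / ((k : ℂ) + 1) ^ 2) :=
      prod_congr rfl fun k _ => by
        rw [show (((2 * k + 1 : ℕ) : ℂ) + 1) = 2 * ((k : ℂ) + 1) by push_cast; ring,
          div_pow, div_div, ← mul_pow]
    rw [prod_range_two_mul, hodd]
    push_cast
    ring
  have hcos : Complex.sin (π * z) / (2 * Complex.sin (π * z / 2)) = Complex.cos (π * z / 2) := by
    rw [show π * z = 2 * (π * z / 2) by ring, Complex.sin_two_mul]
    field_simp
  rw [← hcos]
  refine (hsin.div hsin_half hne).congr' ?_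
  filter_upwards [hsin_half.eventually_ne hne] with n hn
  exact (eq_div_of_mul_eq hn (by simpa [mul_comm] using (hsplit n).symm)).symm

namespace Real

theorem tendsto_euler_cosh_prod (y : ℝ) :
    Tendsto (fun n : ℕ => ∏ k ∈ range n, (1 + y ^ 2 / (2 * k + 1) ^ 2)) atTop
      (𝓝 (cosh (π * y / 2))) := by
  rcases eq_or_ne y 0 with rfl | hy
  · simp
  have hI : (π : ℂ) * (y * Complex.I) / 2 = ((π * y / 2 : ℝ) : ℂ) * Complex.I := by
    push_cast; ring
  have hz : Complex.sin (π * (y * Complex.I) / 2) ≠ 0 := by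
    rw [hI, Complex.sin_mul_I]
    have : sinh (π * y / 2) ≠ 0 := sinh_ne_zero.2 (by simp [hy, pi_ne_zero])
    exact mul_ne_zero (by exact_mod_cast this) Complex.I_ne_zero
  rw [← tendsto_ofReal_iff, Complex.ofReal_cosh]
  convert Complex.tendsto_euler_cos_prod hz using 2 with n
  · push_cast
    refine prod_congr rfl fun k _ => ?_
    rw [mul_pow, Complex.I_sq]
    ring
  · rw [hI, Complex.cos_mul_I]

theorem hasSum_log_one_add_sq_div_odd_sq (y : ℝ) :
    HasSum (fun k : ℕ => log (1 + y ^ 2 / (2 * k + 1) ^ 2)) (log (cosh (π * y / 2))) := by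
  have hpos (k : ℕ) : 0 < 1 + y ^ 2 / (2 * k + 1) ^ 2 := by positivity
  refine (hasSum_iff_tendsto_nat_of_nonneg (fun k => log_nonneg ?_) _).2 ?_
  · exact le_add_of_nonneg_right (by positivity)
  simp_rw [← log_prod fun k _ => (hpos k).ne']
  exact ((continuousAt_log (cosh_pos _).ne').tendsto).comp (tendsto_euler_cosh_prod y)

theorem hasSum_two_mul_exp_neg_odd_mul {t : ℝ} (ht : 0 < t) :
    HasSum (fun n : ℕ => 2 * exp (-(2 * n + 1) * t)) (sinh t)⁻¹ := by
  have hr : exp (-(2 * t)) < 1 := exp_lt_one_iff.2 (by linarith)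
  have hgeo := (hasSum_geometric_of_lt_one (exp_pos _).le hr).mul_left (2 * exp (-t))
  have hsinh : sinh t * (2 * exp (-t)) = 1 - exp (-(2 * t)) := by
    rw [sinh_eq, show -(2 * t) = -t + -t by ring, exp_add, exp_neg]
    field_simp
  have hsinh_ne : sinh t ≠ 0 := (sinh_pos_iff.2 ht).ne'
  rw [show (sinh t)⁻¹ = 2 * exp (-t) * (1 - exp (-(2 * t)))⁻¹ by rw [← hsinh]; field_simp]
  refine hgeo.congr_fun fun n => ?_
  rw [← exp_nat_mul, mul_assoc, ← exp_add]
  ring_nf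

theorem integral_sin_mul_exp_neg (b : ℝ) {c : ℝ} (hc : 0 < c) :
    ∫ t in Ioi (0 : ℝ), sin (b * t) * exp (-c * t) = b / (c ^ 2 + b ^ 2) := by
  have hre : (-c + b * Complex.I).re < 0 := by simpa using hc
  have him (t : ℝ) :
      sin (b * t) * exp (-c * t) = (Complex.exp ((-c + b * Complex.I) * t)).im := by
    rw [show ((-c + b * Complex.I) * t : ℂ) = ((-c * t : ℝ) : ℂ) + ((b * t : ℝ) : ℂ) * Complex.I by
      push_cast; ring, Complex.exp_add, ← Complex.ofReal_exp, Complex.im_ofReal_mul,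
      Complex.exp_ofReal_mul_I_im, mul_comm]
  have hint := integral_im (integrableOn_exp_mul_complex_Ioi hre 0)
  simp only [RCLike.im_to_complex] at hint
  simp_rw [him, hint, integral_exp_mul_complex_Ioi hre]
  simp [Complex.normSq_apply, ← sq, neg_div]

theorem abs_sin_sq_div_le (a t : ℝ) : |sin (a * t) ^ 2 / t| ≤ |a| := by
  rcases eq_or_ne t 0 with rfl | ht
  · simp
  calc |sin (a * t) ^ 2 / t| = |sin (a * t)| * |sin (a * t)| / |t| := by
        rw [abs_div, abs_pow, sq]
    _ ≤ 1 * |a * t| / |t| := by gcongr ?_ * ?_ / _; exacts [abs_sin_le_one _, abs_sin_le_abs]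
    _ = |a| := by rw [one_mul, abs_mul, mul_div_cancel_right₀ _ (abs_ne_zero.2 ht)]

theorem integrableOn_sin_sq_mul_exp_neg_div (a : ℝ) {c : ℝ} (hc : 0 < c) :
    IntegrableOn (fun t => sin (a * t) ^ 2 * exp (-c * t) / t) (Ioi 0) := by
  refine Integrable.mono' ((exp_neg_integrableOn_Ioi 0 hc).const_mul |a|) ?_
    (ae_of_all _ fun t => ?_)
  · exact (ContinuousOn.div (by fun_prop) continuousOn_id fun t ht => ht.ne').aestronglyMeasurable
      measurableSet_Ioi
  · rw [mul_div_right_comm, norm_mul, norm_of_nonneg (exp_pos _).le]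
    exact mul_le_mul_of_nonneg_right (abs_sin_sq_div_le a t) (exp_pos _).le

theorem hasDerivAt_integral_sin_sq_mul_exp_neg_div {c : ℝ} (hc : 0 < c) (a : ℝ) :
    HasDerivAt (fun a => ∫ t in Ioi (0 : ℝ), sin (a * t) ^ 2 * exp (-c * t) / t)
      (2 * a / (c ^ 2 + 4 * a ^ 2)) a := by
  have hderiv (t : ℝ) (ht : t ≠ 0) (b : ℝ) :
      HasDerivAt (fun b => sin (b * t) ^ 2 * exp (-c * t) / t)
        (sin (2 * b * t) * exp (-c * t)) b := by
    refine ((((hasDerivAt_mul_const (x := b) t).sin.pow 2).mul_const (exp (-c * t))).div_const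
      t).congr_deriv ?_
    rw [show 2 * b * t = 2 * (b * t) by ring, sin_two_mul]
    field_simp
    ring
  have hint_deriv := hasDerivAt_integral_of_dominated_loc_of_deriv_le (μ := volume.restrict (Ioi 0))
    (bound := fun t => exp (-c * t)) (Metric.ball_mem_nhds a one_pos)
    (Eventually.of_forall fun b => (integrableOn_sin_sq_mul_exp_neg_div b hc).aestronglyMeasurable)
    (integrableOn_sin_sq_mul_exp_neg_div a hc)
    (by fun_prop : Continuous fun t => sin (2 * a * t) * exp (-c * t)).aestronglyMeasurable
    (ae_of_all _ fun t b _ => by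
      rw [norm_mul, norm_of_nonneg (exp_pos _).le]
      exact mul_le_of_le_one_left (exp_pos _).le (abs_sin_le_one _))
    (exp_neg_integrableOn_Ioi 0 hc)
    ((ae_restrict_mem measurableSet_Ioi).mono fun t ht b _ => hderiv t (ne_of_gt ht) b)
  rw [integral_sin_mul_exp_neg (2 * a) hc] at hint_deriv
  exact hint_deriv.2.congr_deriv (by ring)

theorem integral_sin_sq_mul_exp_neg_div (a : ℝ) {c : ℝ} (hc : 0 < c) :
    ∫ t in Ioi (0 : ℝ), sin (a * t) ^ 2 * exp (-c * t) / t = log (1 + (2 * a / c) ^ 2) / 4 := by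
  have hlog (b : ℝ) :
      HasDerivAt (fun b => log (1 + (2 * b / c) ^ 2) / 4) (2 * b / (c ^ 2 + 4 * b ^ 2)) b := by
    have h : HasDerivAt (fun b => 1 + (2 * b / c) ^ 2) (2 * (2 * b / c) * (2 / c)) b := by
      simpa using ((((hasDerivAt_id' b).const_mul 2).div_const c).pow 2).const_add 1
    refine ((h.log (by positivity)).div_const 4).congr_deriv ?_
    field_simp
    ring
  have hdiff (b : ℝ) := (hasDerivAt_integral_sin_sq_mul_exp_neg_div hc b).sub (hlog b)
  have hconst := is_const_of_deriv_eq_zero (fun b => (hdiff b).differentiableAt)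
    (fun b => (hdiff b).deriv.trans (sub_self _)) a 0
  simpa [sub_eq_zero] using hconst

end Real

namespace MeasureTheory

variable {α : Type*} [MeasurableSpace α] {μ : Measure α} {F : ℕ → α → ℝ} {f : α → ℝ}

theorem integrable_of_hasSum_of_nonneg (hF_nonneg : ∀ n, 0 ≤ᵐ[μ] F n)
    (hF_int : ∀ n, Integrable (F n) μ) (hF_sum : Summable fun n => ∫ a, F n a ∂μ)
    (hf : ∀ᵐ a ∂μ, HasSum (F · a) (f a)) : Integrable f μ := by
  have hf_meas : AEStronglyMeasurable f μ :=
    aestronglyMeasurable_of_tendsto_ae atTop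
      (fun n => (Finset.aestronglyMeasurable_sum (range n) fun k _ => (hF_int k).1))
      (hf.mono fun a ha => by simpa using ha.tendsto_sum_nat)
  have hf_nonneg : 0 ≤ᵐ[μ] f := by
    filter_upwards [hf, ae_all_iff.2 hF_nonneg] with a ha hpos using ha.nonneg hpos
  refine ⟨hf_meas, (hasFiniteIntegral_iff_ofReal hf_nonneg).2 ?_⟩
  calc ∫⁻ a, ENNReal.ofReal (f a) ∂μ = ∫⁻ a, ∑' n, ENNReal.ofReal (F n a) ∂μ := by
        refine lintegral_congr_ae ?_
        filter_upwards [hf, ae_all_iff.2 hF_nonneg] with a ha hpos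
        rw [← ha.tsum_eq, ENNReal.ofReal_tsum_of_nonneg hpos ha.summable]
    _ = ∑' n, ENNReal.ofReal (∫ a, F n a ∂μ) := by
        rw [lintegral_tsum fun n => (hF_int n).1.aemeasurable.ennreal_ofReal]
        exact tsum_congr fun n =>
          (ofReal_integral_eq_lintegral_ofReal (hF_int n) (hF_nonneg n)).symm
    _ = ENNReal.ofReal (∑' n, ∫ a, F n a ∂μ) :=
        (ENNReal.ofReal_tsum_of_nonneg (fun n => integral_nonneg_of_ae (hF_nonneg n)) hF_sum).symm
    _ < ⊤ := ENNReal.ofReal_lt_top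

theorem hasSum_integral_of_nonneg (hF_nonneg : ∀ n, 0 ≤ᵐ[μ] F n)
    (hF_int : ∀ n, Integrable (F n) μ) (hF_sum : Summable fun n => ∫ a, F n a ∂μ)
    (hf : ∀ᵐ a ∂μ, HasSum (F · a) (f a)) : HasSum (fun n => ∫ a, F n a ∂μ) (∫ a, f a ∂μ) := by
  have hnorm (n : ℕ) : ∫ a, ‖F n a‖ ∂μ = ∫ a, F n a ∂μ :=
    integral_congr_ae ((hF_nonneg n).mono fun a ha => norm_of_nonneg ha)
  have h := hasSum_integral_of_summable_integral_norm hF_int (by simpa only [hnorm] using hF_sum)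
  rwa [integral_congr_ae (hf.mono fun a ha => ha.tsum_eq)] at h

end MeasureTheory

/-- the building-block identity `g₀` on the line `θ = x + iπ`:
`2∫₀^∞ sin²(xt/2π)/(t·sinh t) dt = log cosh(x/2)`, the integral being absolutely
convergent. -/
theorem g0_integral_identity (x : ℝ) :
    IntegrableOn
      (fun t : ℝ => Real.sin (x * t / (2 * Real.pi)) ^ 2 / (t * Real.sinh t))
      (Set.Ioi 0) ∧
    2 * ∫ t in Set.Ioi (0 : ℝ),
        Real.sin (x * t / (2 * Real.pi)) ^ 2 / (t * Real.sinh t)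
      = Real.log (Real.cosh (x / 2)) := by
  simp_rw [mul_div_right_comm x]
  set a := x / (2 * π)
  have h2a : 2 * a = x / π := by simp only [a]; field_simp
  set F : ℕ → ℝ → ℝ := fun n t => 2 * (sin (a * t) ^ 2 * exp (-(2 * n + 1) * t) / t)
  have hF_sum : ∀ᵐ t ∂volume.restrict (Ioi 0), HasSum (F · t) (sin (a * t) ^ 2 / (t * sinh t)) :=
    (ae_restrict_mem measurableSet_Ioi).mono fun t ht => by
      have h := (hasSum_two_mul_exp_neg_odd_mul ht).mul_left (sin (a * t) ^ 2 / t)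
      rw [← div_eq_mul_inv, div_div] at h
      exact h.congr_fun fun n => by simp only [F]; ring
  have hF_nonneg (n : ℕ) : 0 ≤ᵐ[volume.restrict (Ioi 0)] F n :=
    (ae_restrict_mem measurableSet_Ioi).mono fun t (ht : 0 < t) => by positivity
  have hF_int (n : ℕ) : Integrable (F n) (volume.restrict (Ioi 0)) :=
    (integrableOn_sin_sq_mul_exp_neg_div a (by positivity)).const_mul 2
  have hF_integral : HasSum (fun n => ∫ t in Ioi 0, F n t) (log (cosh (x / 2)) / 2) := by
    have h := (hasSum_log_one_add_sq_div_odd_sq (x / π)).div_const 2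
    rw [mul_div_cancel₀ _ pi_ne_zero] at h
    refine h.congr_fun fun n => ?_
    rw [integral_const_mul, integral_sin_sq_mul_exp_neg_div a (by positivity), h2a, div_pow]
    ring
  refine ⟨integrable_of_hasSum_of_nonneg hF_nonneg hF_int hF_integral.summable hF_sum, ?_⟩
  rw [(hasSum_integral_of_nonneg hF_nonneg hF_int hF_integral.summable hF_sum).unique hF_integral]
  ring
end

section
/- The number of partitions λ of 12 with all parts at most 4 and satisfying m₁(λ) ≤ 6, m₂(λ) ≤ 10 and m₃(λ) ≤ 12 equals 16. -/
open scoped Classical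

/-- `m_k(λ) = Σ_i min(λ_i, k)`, the `k`-th partial degree of the monomial `σ_λ`. -/
def partitionPartialDeg {D : ℕ} (lam : Nat.Partition D) (k : ℕ) : ℕ :=
  (lam.parts.map fun p => min p k).sum

/-- The 16 possible multiplicity vectors `(count 1, count 2, count 3, count 4)`. -/
def tupleSet : Finset (ℕ×ℕ×ℕ×ℕ) :=
  {(0,0,0,3), (0,0,4,0), (0,1,2,1), (0,2,0,2), (0,3,2,0), (0,4,0,1),
   (1,0,1,2), (1,1,3,0), (1,2,1,1), (2,0,2,1), (2,1,0,2), (2,2,2,0),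
   (2,3,0,1), (3,0,3,0), (3,1,1,1), (4,0,0,2)}

lemma parts_canon {D : ℕ} (lam : Nat.Partition D) (h4 : ∀ p ∈ lam.parts, p ≤ 4) :
    lam.parts = Multiset.replicate (lam.parts.count 1) 1 +
      Multiset.replicate (lam.parts.count 2) 2 +
      Multiset.replicate (lam.parts.count 3) 3 +
      Multiset.replicate (lam.parts.count 4) 4 := by
  ext n
  simp only [Multiset.count_add, Multiset.count_replicate]
  by_cases hn : n ∈ lam.parts
  · have hp := lam.parts_pos hn
    have hq := h4 n hn
    interval_cases n <;> simp
  · have h0 : lam.parts.count n = 0 := Multiset.count_eq_zero_of_notMem hn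
    rw [h0]
    split_ifs with h1 h2 h3 h4' <;> simp_all

def mk4 (a b c d : ℕ) (h : a + 2*b + 3*c + 4*d = 12) : Nat.Partition 12 where
  parts := Multiset.replicate a 1 + Multiset.replicate b 2 +
    Multiset.replicate c 3 + Multiset.replicate d 4
  parts_pos := by
    intro i hi
    simp only [Multiset.mem_add, Multiset.mem_replicate] at hi
    rcases hi with ((⟨_,rfl⟩|⟨_,rfl⟩)|⟨_,rfl⟩)|⟨_,rfl⟩ <;> norm_num
  parts_sum := by
    simp [Multiset.sum_replicate, smul_eq_mul]
    omega

lemma mk4_count (a b c d : ℕ) (h : a + 2*b + 3*c + 4*d = 12) :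
    (mk4 a b c d h).parts.count 1 = a ∧ (mk4 a b c d h).parts.count 2 = b ∧
    (mk4 a b c d h).parts.count 3 = c ∧ (mk4 a b c d h).parts.count 4 = d := by
  simp [mk4, Multiset.count_replicate]

lemma mk4_deg (a b c d : ℕ) (h : a + 2*b + 3*c + 4*d = 12) (k : ℕ) :
    partitionPartialDeg (mk4 a b c d h) k =
      a * min 1 k + b * min 2 k + c * min 3 k + d * min 4 k := by
  simp [partitionPartialDeg, mk4, Multiset.map_replicate, Multiset.sum_replicate, smul_eq_mul]

lemma classify (lam : Nat.Partition 12) (h4 : ∀ p ∈ lam.parts, p ≤ 4) :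
    ∃ (a b c d : ℕ) (h : a + 2*b + 3*c + 4*d = 12), lam = mk4 a b c d h := by
  have hs := lam.parts_sum
  rw [parts_canon lam h4] at hs
  simp only [Multiset.sum_add, Multiset.sum_replicate, smul_eq_mul] at hs
  exact ⟨lam.parts.count 1, lam.parts.count 2, lam.parts.count 3, lam.parts.count 4,
    by omega, Nat.Partition.ext (parts_canon lam h4)⟩

lemma mem_aux : ∀ a b c d : Fin 7, a.1 + 2*b.1 + 3*c.1 + 4*d.1 = 12 →
    a.1 + b.1 + c.1 + d.1 ≤ 6 → a.1 + 2*b.1 + 2*c.1 + 2*d.1 ≤ 10 →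
    a.1 + 2*b.1 + 3*c.1 + 3*d.1 ≤ 12 → (a.1, b.1, c.1, d.1) ∈ tupleSet := by decide

lemma mem_tupleSet (a b c d : ℕ) (hs : a + 2*b + 3*c + 4*d = 12)
    (h1 : a + b + c + d ≤ 6) (h2 : a + 2*b + 2*c + 2*d ≤ 10)
    (h3 : a + 2*b + 3*c + 3*d ≤ 12) : (a, b, c, d) ∈ tupleSet := by
  have ha : a < 7 := by omega
  have hb : b < 7 := by omega
  have hc : c < 7 := by omega
  have hd : d < 7 := by omega
  exact mem_aux ⟨a, ha⟩ ⟨b, hb⟩ ⟨c, hc⟩ ⟨d, hd⟩ hs h1 h2 h3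

lemma tup_facts : ∀ t ∈ tupleSet, t.1 + 2*t.2.1 + 3*t.2.2.1 + 4*t.2.2.2 = 12 ∧
    t.1 + t.2.1 + t.2.2.1 + t.2.2.2 ≤ 6 ∧
    t.1 + 2*t.2.1 + 2*t.2.2.1 + 2*t.2.2.2 ≤ 10 ∧
    t.1 + 2*t.2.1 + 3*t.2.2.1 + 3*t.2.2.2 ≤ 12 := by decide

/-- the number of partitions of 12 with parts at most 4 and
`m₁ ≤ 6`, `m₂ ≤ 10`, `m₃ ≤ 12` equals 16 (Table 4, `2n = 4`, disorder fields). -/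
theorem count_partitions_disorder_4particles :
    (Finset.univ.filter fun lam : Nat.Partition 12 =>
      (∀ p ∈ lam.parts, p ≤ 4) ∧
      partitionPartialDeg lam 1 ≤ 6 ∧
      partitionPartialDeg lam 2 ≤ 10 ∧
      partitionPartialDeg lam 3 ≤ 12).card = 16 := by
  have key : (Finset.univ.filter fun lam : Nat.Partition 12 =>
      (∀ p ∈ lam.parts, p ≤ 4) ∧
      partitionPartialDeg lam 1 ≤ 6 ∧
      partitionPartialDeg lam 2 ≤ 10 ∧
      partitionPartialDeg lam 3 ≤ 12).card = tupleSet.card := by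
    apply Finset.card_bij (fun lam _ =>
      (lam.parts.count 1, lam.parts.count 2, lam.parts.count 3, lam.parts.count 4))
    · intro lam hl
      rw [Finset.mem_filter] at hl
      obtain ⟨-, h4, hm1, hm2, hm3⟩ := hl
      obtain ⟨a, b, c, d, h, rfl⟩ := classify lam h4
      obtain ⟨e1, e2, e3, e4⟩ := mk4_count a b c d h
      rw [e1, e2, e3, e4]
      rw [mk4_deg] at hm1 hm2 hm3
      norm_num at hm1 hm2 hm3
      exact mem_tupleSet a b c d h (by omega) (by omega) (by omega)
    · intro l1 hl1 l2 hl2 heq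
      rw [Finset.mem_filter] at hl1 hl2
      simp only [Prod.mk.injEq] at heq
      obtain ⟨e1, e2, e3, e4⟩ := heq
      refine Nat.Partition.ext ?_
      rw [parts_canon l1 hl1.2.1, parts_canon l2 hl2.2.1, e1, e2, e3, e4]
    · intro t ht
      obtain ⟨hs, h1, h2, h3⟩ := tup_facts t ht
      refine ⟨mk4 t.1 t.2.1 t.2.2.1 t.2.2.2 hs, ?_, ?_⟩
      · rw [Finset.mem_filter]
        refine ⟨Finset.mem_univ _, ?_, ?_, ?_, ?_⟩
        · intro p hp
          simp only [mk4, Multiset.mem_add, Multiset.mem_replicate] at hp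
          rcases hp with ((⟨_,rfl⟩|⟨_,rfl⟩)|⟨_,rfl⟩)|⟨_,rfl⟩ <;> norm_num
        · rw [mk4_deg]; norm_num; omega
        · rw [mk4_deg]; norm_num; omega
        · rw [mk4_deg]; norm_num; omega
      · obtain ⟨e1, e2, e3, e4⟩ := mk4_count t.1 t.2.1 t.2.2.1 t.2.2.2 hs
        rw [e1, e2, e3, e4]
  rw [key]
  decide
end

section
/- The number of partitions λ of 21 with all parts at most 6 and satisfying m₁(λ) ≤ 7, m₂(λ) ≤ 14, m₃(λ) ≤ 18, m₄(λ) ≤ 21 and m₅(λ) ≤ 21 equals 88. -/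
open scoped Classical

namespace Aux17

open Multiset

lemma decomp (m : Multiset ℕ) (h0 : ∀ p ∈ m, 0 < p) (h6 : ∀ p ∈ m, p ≤ 6) :
    m = replicate (m.count 1) 1 + replicate (m.count 2) 2 + replicate (m.count 3) 3 +
        replicate (m.count 4) 4 + replicate (m.count 5) 5 + replicate (m.count 6) 6 := by
  ext n
  by_cases e1 : n = 1
  · subst e1; simp [Multiset.count_add, Multiset.count_replicate]
  by_cases e2 : n = 2
  · subst e2; simp [Multiset.count_add, Multiset.count_replicate]
  by_cases e3 : n = 3
  · subst e3; simp [Multiset.count_add, Multiset.count_replicate]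
  by_cases e4 : n = 4
  · subst e4; simp [Multiset.count_add, Multiset.count_replicate]
  by_cases e5 : n = 5
  · subst e5; simp [Multiset.count_add, Multiset.count_replicate]
  by_cases e6 : n = 6
  · subst e6; simp [Multiset.count_add, Multiset.count_replicate]
  have hn : n ∉ m := fun hmem => by
    have := h0 n hmem; have := h6 n hmem
    interval_cases n <;> simp_all
  simp only [Multiset.count_add, Multiset.count_replicate, Multiset.count_eq_zero_of_notMem hn]
  split_ifs <;> omega

end Aux17

set_option maxRecDepth 1000000 in
set_option maxHeartbeats 2000000 in
/-- the number of partitions of 21 with parts at most 6 and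
`m₁ ≤ 7`, `m₂ ≤ 14`, `m₃ ≤ 18`, `m₄ ≤ 21`, `m₅ ≤ 21` equals 88
(Table 4, `2n = 6`, field Θ). -/
theorem count_partitions_Theta_6particles :
    (Finset.univ.filter fun lam : Nat.Partition 21 =>
      (∀ p ∈ lam.parts, p ≤ 6) ∧
      partitionPartialDeg lam 1 ≤ 7 ∧
      partitionPartialDeg lam 2 ≤ 14 ∧
      partitionPartialDeg lam 3 ≤ 18 ∧
      partitionPartialDeg lam 4 ≤ 21 ∧
      partitionPartialDeg lam 5 ≤ 21).card = 88 := by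
  classical
  have key : (Finset.univ.filter fun lam : Nat.Partition 21 =>
      (∀ p ∈ lam.parts, p ≤ 6) ∧
      partitionPartialDeg lam 1 ≤ 7 ∧
      partitionPartialDeg lam 2 ≤ 14 ∧
      partitionPartialDeg lam 3 ≤ 18 ∧
      partitionPartialDeg lam 4 ≤ 21 ∧
      partitionPartialDeg lam 5 ≤ 21).card
      = ((((Finset.range 8)) ×ˢ (Finset.range 8) ×ˢ (Finset.range 6) ×ˢ (Finset.range 5) ×ˢ
          (Finset.range 4)).filter
        (fun v : ℕ×ℕ×ℕ×ℕ×ℕ =>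
          2*v.1+3*v.2.1+4*v.2.2.1+5*v.2.2.2.1+6*v.2.2.2.2 ≤ 21 ∧
          21 - (2*v.1+3*v.2.1+4*v.2.2.1+5*v.2.2.2.1+6*v.2.2.2.2)
            + (v.1+v.2.1+v.2.2.1+v.2.2.2.1+v.2.2.2.2) ≤ 7 ∧
          21 - (2*v.1+3*v.2.1+4*v.2.2.1+5*v.2.2.2.1+6*v.2.2.2.2)
            + 2*(v.1+v.2.1+v.2.2.1+v.2.2.2.1+v.2.2.2.2) ≤ 14 ∧
          21 - (2*v.1+3*v.2.1+4*v.2.2.1+5*v.2.2.2.1+6*v.2.2.2.2)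
            + 2*v.1 + 3*(v.2.1+v.2.2.1+v.2.2.2.1+v.2.2.2.2) ≤ 18)).card := by
    refine Finset.card_bij'
      (i := fun lam _ => (lam.parts.count 2, lam.parts.count 3, lam.parts.count 4,
        lam.parts.count 5, lam.parts.count 6))
      (j := fun v hv => Nat.Partition.mk
        (Multiset.replicate (21 - (2*v.1+3*v.2.1+4*v.2.2.1+5*v.2.2.2.1+6*v.2.2.2.2)) 1 +
         Multiset.replicate v.1 2 + Multiset.replicate v.2.1 3 + Multiset.replicate v.2.2.1 4 +
         Multiset.replicate v.2.2.2.1 5 + Multiset.replicate v.2.2.2.2 6)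
        ?_ ?_) ?_ ?_ ?_ ?_
    · intro p hp
      simp only [Multiset.mem_add, Multiset.mem_replicate] at hp
      rcases hp with ((((h|h)|h)|h)|h)|h <;> omega
    · obtain ⟨-, hQ⟩ := Finset.mem_filter.mp hv
      simp only [Multiset.sum_add, Multiset.sum_replicate, smul_eq_mul]
      omega
    · -- hi : counts land in the tuple filter
      intro lam hlam
      obtain ⟨-, h6, h1, h2, h3, -, -⟩ := Finset.mem_filter.mp hlam
      have hd := Aux17.decomp lam.parts (fun p hp => lam.parts_pos hp) h6
      set c1 := lam.parts.count 1
      set c2 := lam.parts.count 2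
      set c3 := lam.parts.count 3
      set c4 := lam.parts.count 4
      set c5 := lam.parts.count 5
      set c6 := lam.parts.count 6
      have hsum : c1 + 2*c2 + 3*c3 + 4*c4 + 5*c5 + 6*c6 = 21 := by
        have := lam.parts_sum
        rw [hd] at this
        simpa [Multiset.sum_add, Multiset.sum_replicate, smul_eq_mul, mul_comm] using this
      have hm1 : partitionPartialDeg lam 1 = c1 + c2 + c3 + c4 + c5 + c6 := by
        unfold partitionPartialDeg
        rw [hd]
        simp [Multiset.map_add, Multiset.map_replicate, Multiset.sum_add,
          Multiset.sum_replicate]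
      have hm2 : partitionPartialDeg lam 2 = c1 + 2*c2 + 2*c3 + 2*c4 + 2*c5 + 2*c6 := by
        unfold partitionPartialDeg
        rw [hd]
        simp [Multiset.map_add, Multiset.map_replicate, Multiset.sum_add,
          Multiset.sum_replicate]
        omega
      have hm3 : partitionPartialDeg lam 3 = c1 + 2*c2 + 3*c3 + 3*c4 + 3*c5 + 3*c6 := by
        unfold partitionPartialDeg
        rw [hd]
        simp [Multiset.map_add, Multiset.map_replicate, Multiset.sum_add,
          Multiset.sum_replicate]
        omega
      simp only [Finset.mem_filter, Finset.mem_product, Finset.mem_range]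
      refine ⟨⟨?_, ?_, ?_, ?_, ?_⟩, ?_, ?_, ?_, ?_⟩ <;> omega
    · -- hj : constructed partition lands in the partition filter
      intro v hv
      obtain ⟨-, hs, hq1, hq2, hq3⟩ := Finset.mem_filter.mp hv
      simp only [Finset.mem_filter, Finset.mem_univ, true_and]
      constructor
      · intro p hp
        simp only [Multiset.mem_add, Multiset.mem_replicate] at hp
        rcases hp with ((((h|h)|h)|h)|h)|h <;> omega
      · refine ⟨?_, ?_, ?_, ?_, ?_⟩ <;>
        · unfold partitionPartialDeg
          simp only [Multiset.map_add, Multiset.map_replicate, Multiset.sum_add,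
            Multiset.sum_replicate, smul_eq_mul]
          norm_num
          omega
    · -- left_inv
      intro lam hlam
      obtain ⟨-, h6, -⟩ := Finset.mem_filter.mp hlam
      have hd := Aux17.decomp lam.parts (fun p hp => lam.parts_pos hp) h6
      have hsum : lam.parts.count 1 + 2*lam.parts.count 2 + 3*lam.parts.count 3 +
          4*lam.parts.count 4 + 5*lam.parts.count 5 + 6*lam.parts.count 6 = 21 := by
        have := lam.parts_sum
        rw [hd] at this
        simpa [Multiset.sum_add, Multiset.sum_replicate, smul_eq_mul, mul_comm] using this
      have hc : 21 - (2*lam.parts.count 2 + 3*lam.parts.count 3 + 4*lam.parts.count 4 +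
          5*lam.parts.count 5 + 6*lam.parts.count 6) = lam.parts.count 1 := by omega
      apply Nat.Partition.ext
      show Multiset.replicate _ 1 + _ + _ + _ + _ + _ = lam.parts
      rw [hc]
      exact hd.symm
    · -- right_inv
      intro v hv
      simp only [Multiset.count_add, Multiset.count_replicate]
      norm_num
  rw [key]
  decide
end
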